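/- arXiv:1307.4466 — 11 statements merged into one kernel-verified Lean document; each statement's English description precedes it below -/
import Mathlib

section
/- Let (V,E) be a finite directed graph in which every node has at least one outgoing edge, and let c, c' : V → ℕ be two coloring functions. Then c ≡ c' if and only if for every simple cycle C in (V,E), the c-color of C and the c'-color of C are congruent modulo 2. -/
/-- A cycle in a directed graph `(V, E)`: a sequence `f 0, …, f n` of nodes with an
edge from each node to the next, and from the last back to the first
(successor indices are taken cyclically in `Fin (n+1)`). -/
def IsCycle {V : Type*} (E : V → V → Prop) (n : ℕ) (f : Fin (n + 1) → V) : Prop :=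
  ∀ i : Fin (n + 1), E (f i) (f (i + 1))

/-- A simple cycle: a cycle whose nodes are pairwise distinct. -/
def IsSimpleCycle {V : Type*} (E : V → V → Prop) (n : ℕ) (f : Fin (n + 1) → V) : Prop :=
  IsCycle E n f ∧ Function.Injective f

/-- The `c`-color of a cycle: the minimum of `c` over its nodes. -/
noncomputable def cColor {V : Type*} (c : V → ℕ) {n : ℕ} (f : Fin (n + 1) → V) : ℕ :=
  sInf (Set.range fun i => c (f i))

/-- Parity-equivalence on simple cycles: every simple cycle has `c`-color and
`c'`-color of the same parity. -/
def SCEquiv {V : Type*} (E : V → V → Prop) (c c' : V → ℕ) : Prop :=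
  ∀ (n : ℕ) (f : Fin (n + 1) → V), IsSimpleCycle E n f → cColor c f % 2 = cColor c' f % 2

/-- Parity-equivalence on all cycles (the abstract equivalence `≡α`). -/
def CycEquiv {V : Type*} (E : V → V → Prop) (c c' : V → ℕ) : Prop :=
  ∀ (n : ℕ) (f : Fin (n + 1) → V), IsCycle E n f → cColor c f % 2 = cColor c' f % 2

/-- The index `μ(c)`: the maximal color of `c`. -/
noncomputable def idx {V : Type*} (c : V → ℕ) : ℕ := sSup (Set.range c)

/-- The Rabin index `RI(c)`: the least possible index among colorings
parity-equivalent to `c` on simple cycles. -/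
noncomputable def RI {V : Type*} (E : V → V → Prop) (c : V → ℕ) : ℕ :=
  sInf {k | ∃ c' : V → ℕ, SCEquiv E c c' ∧ idx c' = k}

/-- The abstract Rabin index `RIα(c)`: the least possible index among colorings
parity-equivalent to `c` on all cycles. -/
noncomputable def RIa {V : Type*} (E : V → V → Prop) (c : V → ℕ) : ℕ :=
  sInf {k | ∃ c' : V → ℕ, CycEquiv E c c' ∧ idx c' = k}

/-- A play: an infinite `E`-path. -/
def IsPlay {V : Type*} (E : V → V → Prop) (P : ℕ → V) : Prop :=
  ∀ i, E (P i) (P (i + 1))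

/-- A strategy (for the player owning the nodes in `S`): moves along edges from `S`. -/
def IsStrategy {V : Type*} (E : V → V → Prop) (S : Set V) (τ : V → V) : Prop :=
  ∀ v ∈ S, E v (τ v)

/-- A play is consistent with strategy `τ` on node set `S`. -/
def Consistent {V : Type*} (S : Set V) (τ : V → V) (P : ℕ → V) : Prop :=
  ∀ i, P i ∈ S → P (i + 1) = τ (P i)

/-- The minimum color occurring infinitely often along play `P`. -/
noncomputable def minInf {V : Type*} (c : V → ℕ) (P : ℕ → V) : ℕ :=
  sInf {k | ∀ j, ∃ i, j < i ∧ c (P i) = k}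

/-- The node set owned by player `s` (player `false` = player 0 owns `V0`,
player `true` = player 1 owns the complement `V1 = V0ᶜ`). -/
def playerSet {V : Type*} (V0 : Set V) (s : Bool) : Set V :=
  if s then V0ᶜ else V0

/-- Player `s` wins play `P`: player 0 wins iff the minimum color occurring
infinitely often is even, player 1 wins otherwise. -/
def WinsPlay {V : Type*} (c : V → ℕ) (s : Bool) (P : ℕ → V) : Prop :=
  if s then ¬ Even (minInf c P) else Even (minInf c P)

/-- The winning region of player `s` in the parity game `(V, V0, V0ᶜ, E, c)`. -/
def WinRegion {V : Type*} (E : V → V → Prop) (c : V → ℕ) (V0 : Set V) (s : Bool) : Set V :=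
  {v | ∃ τ : V → V, IsStrategy E (playerSet V0 s) τ ∧
    ∀ P : ℕ → V, IsPlay E P → P 0 = v → Consistent (playerSet V0 s) τ P → WinsPlay c s P}

/-- A winning strategy for player `s`: a strategy winning every consistent play
that starts in the winning region of player `s`. -/
def IsWinStrategy {V : Type*} (E : V → V → Prop) (c : V → ℕ) (V0 : Set V) (s : Bool)
    (τ : V → V) : Prop :=
  IsStrategy E (playerSet V0 s) τ ∧
  ∀ v ∈ WinRegion E c V0 s, ∀ P : ℕ → V,
    IsPlay E P → P 0 = v → Consistent (playerSet V0 s) τ P → WinsPlay c s P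

/-- Game-theoretic equivalence of colorings: for every partition `V = V0 ∪ V0ᶜ`,
the two parity games have the same winning regions and the same sets of winning
strategies for both players. -/
def GameEquiv {V : Type*} (E : V → V → Prop) (c c' : V → ℕ) : Prop :=
  ∀ (V0 : Set V) (s : Bool),
    WinRegion E c V0 s = WinRegion E c' V0 s ∧
    ∀ τ : V → V, IsWinStrategy E c V0 s τ ↔ IsWinStrategy E c' V0 s τ


namespace RabinAux

open Fin.NatCast

variable {V : Type*}

/-- nodes visited infinitely often -/
def InfVisit (P : ℕ → V) : Set V := {u | ∀ j, ∃ i, j < i ∧ P i = u}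

lemma exists_infVisit_of_forall [Fintype V] (P : ℕ → V) (F : Finset V)
    (h : ∀ j, ∃ i, j < i ∧ P i ∈ F) : ∃ u ∈ F, u ∈ InfVisit P := by
  classical
  by_contra hc
  push_neg at hc
  have key : ∀ u : V, ∃ j : ℕ, u ∈ InfVisit P ∨ ∀ i, j < i → P i ≠ u := by
    intro u
    by_cases hu : u ∈ InfVisit P
    · exact ⟨0, Or.inl hu⟩
    · simp only [InfVisit, Set.mem_setOf_eq] at hu
      push_neg at hu
      obtain ⟨j, hj⟩ := hu
      exact ⟨j, Or.inr (fun i hi => (hj i hi))⟩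
  choose J hJ using key
  obtain ⟨i, hi, hiF⟩ := h (Finset.univ.sup J)
  rcases hJ (P i) with h1 | h2
  · exact hc (P i) hiF h1
  · exact h2 i (lt_of_le_of_lt (Finset.le_sup (Finset.mem_univ (P i))) hi) rfl

lemma infVisit_nonempty [Fintype V] [Nonempty V] (P : ℕ → V) : (InfVisit P).Nonempty := by
  obtain ⟨u, _, hu⟩ := exists_infVisit_of_forall P Finset.univ
    (fun j => ⟨j+1, Nat.lt_succ_self j, Finset.mem_univ _⟩)
  exact ⟨u, hu⟩

lemma exists_tail_infVisit [Fintype V] (P : ℕ → V) :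
    ∃ T, ∀ i, T ≤ i → P i ∈ InfVisit P := by
  classical
  by_contra hc
  push_neg at hc
  obtain ⟨u, hu, hu2⟩ := exists_infVisit_of_forall P
    (Finset.univ.filter (fun u => u ∉ InfVisit P)) (by
      intro j
      obtain ⟨i, hij, hi⟩ := hc (j+1)
      exact ⟨i, lt_of_lt_of_le (Nat.lt_succ_self j) hij, by simp [hi]⟩)
  simp only [Finset.mem_filter] at hu
  exact hu.2 hu2

lemma minInf_eq [Fintype V] (c : V → ℕ) (P : ℕ → V) :
    minInf c P = sInf (c '' InfVisit P) := by
  classical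
  unfold minInf
  congr 1
  ext k
  simp only [Set.mem_setOf_eq, Set.mem_image]
  constructor
  · intro hk
    obtain ⟨u, hu, huI⟩ := exists_infVisit_of_forall P (Finset.univ.filter (fun u => c u = k))
      (by
        intro j
        obtain ⟨i, hij, hi⟩ := hk j
        exact ⟨i, hij, by simp [hi]⟩)
    simp only [Finset.mem_filter] at hu
    exact ⟨u, huI, hu.2⟩
  · rintro ⟨u, hu, rfl⟩ j
    obtain ⟨i, hij, hi⟩ := hu j
    exact ⟨i, hij, by rw [hi]⟩

lemma minInf_cyc [Fintype V] (c : V → ℕ) {n : ℕ} (f : Fin (n+1) → V) (P : ℕ → V)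
    (i₀ : ℕ) (t : Fin (n+1)) (h : ∀ j : ℕ, P (i₀ + j) = f (t + (j : Fin (n+1)))) :
    minInf c P = cColor c f := by
  have hIV : InfVisit P = Set.range f := by
    ext u
    constructor
    · intro hu
      obtain ⟨i, hi, hPu⟩ := hu i₀
      have hi' : i = i₀ + (i - i₀) := by omega
      rw [hi', h] at hPu
      exact ⟨_, hPu⟩
    · rintro ⟨a, rfl⟩
      intro j
      refine ⟨i₀ + ((a - t).val + (j+1)*(n+1)), by nlinarith [Nat.zero_le ((a-t).val), Nat.zero_le i₀], ?_⟩
      rw [h]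
      congr 1
      push_cast
      have hn0 : (((j + 1) * (n + 1) : ℕ) : Fin (n+1)) = 0 := Fin.ext (by simp [Fin.val_natCast])
      rw [hn0, add_zero, add_sub_cancel]
  rw [minInf_eq, hIV, cColor, ← Set.range_comp]
  rfl




lemma loop_erase (E : V → V → Prop) (U : Set V) :
    ∀ (k : ℕ) (g : ℕ → V), 1 ≤ k → g k = g 0 →
    (∀ j < k, E (g j) (g (j+1))) → (∀ j ≤ k, g j ∈ U) →
    ∃ (n : ℕ) (f : Fin (n+1) → V), (∀ i : Fin (n+1), E (f i) (f (i+1))) ∧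
      Function.Injective f ∧ f 0 = g 0 ∧ ∀ i, f i ∈ U := by
  intro k
  induction k using Nat.strong_induction_on with
  | _ k IH =>
  intro g hk hgk hEg hUg
  by_cases hinj : ∀ a b : ℕ, a < b → b < k → g a ≠ g b
  · -- g is injective on [0, k): build the simple cycle directly
    obtain ⟨m, rfl⟩ : ∃ m, k = m + 1 := ⟨k - 1, by omega⟩
    refine ⟨m, fun i => g i.val, ?_, ?_, rfl, fun i => hUg i.val (by omega)⟩
    · intro i
      show E (g i.val) (g (i + 1).val)
      rcases eq_or_ne i (Fin.last m) with h | h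
      · have h1 : (i + 1).val = 0 := by rw [Fin.val_add_one, if_pos h]
        have h2 : i.val = m := by rw [h]; rfl
        rw [h1, h2, ← hgk]
        exact hEg m (Nat.lt_succ_self m)
      · have h1 : (i + 1).val = i.val + 1 := by rw [Fin.val_add_one, if_neg h]
        rw [h1]
        exact hEg i.val (by omega)
    · intro a b hab
      by_contra hne
      have hab' : g a.val = g b.val := hab
      rcases Nat.lt_or_ge a.val b.val with h | h
      · exact hinj a.val b.val h b.isLt hab'
      · have h' : b.val < a.val := by
          rcases Nat.lt_or_ge b.val a.val with h2 | h2
          · exact h2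
          · exact absurd (Fin.ext (le_antisymm h2 h)) hne
        exact hinj b.val a.val h' a.isLt hab'.symm
  · push_neg at hinj
    obtain ⟨a, b, hab, hbk, hgab⟩ := hinj
    have hd1 : 1 ≤ b - a := by omega
    have hk'a : a < k - (b - a) := by omega
    have h1 : 1 ≤ k - (b - a) := by omega
    have hlt : k - (b - a) < k := by omega
    have hg'k : (fun j => if j ≤ a then g j else g (j + (b - a))) (k - (b - a))
        = (fun j => if j ≤ a then g j else g (j + (b - a))) 0 := by
      show (if k - (b-a) ≤ a then g (k - (b-a)) else g (k - (b-a) + (b-a))) = _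
      rw [if_neg (by omega)]
      have e : k - (b-a) + (b-a) = k := by omega
      rw [e, hgk]
      show g 0 = (if 0 ≤ a then g 0 else _)
      rw [if_pos (Nat.zero_le a)]
    have hEg' : ∀ j < k - (b - a),
        E ((fun j => if j ≤ a then g j else g (j + (b - a))) j)
          ((fun j => if j ≤ a then g j else g (j + (b - a))) (j+1)) := by
      intro j hj
      show E (if j ≤ a then g j else g (j + (b-a))) (if j + 1 ≤ a then g (j+1) else g (j + 1 + (b-a)))
      rcases Nat.lt_or_ge j a with h | h
      · rw [if_pos (le_of_lt h), if_pos (by omega)]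
        exact hEg j (by omega)
      · rcases eq_or_lt_of_le h with h2 | h2
        · subst h2
          rw [if_pos (le_refl a), if_neg (by omega), hgab]
          have e : a + 1 + (b - a) = b + 1 := by omega
          rw [e]
          exact hEg b hbk
        · rw [if_neg (by omega), if_neg (by omega)]
          have e : j + 1 + (b - a) = j + (b - a) + 1 := by omega
          rw [e]
          exact hEg (j + (b-a)) (by omega)
    have hUg' : ∀ j ≤ k - (b - a), (fun j => if j ≤ a then g j else g (j + (b - a))) j ∈ U := by
      intro j hj
      show (if j ≤ a then g j else g (j + (b-a))) ∈ U
      rcases le_or_gt j a with h | h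
      · rw [if_pos h]; exact hUg j (by omega)
      · rw [if_neg (by omega)]; exact hUg (j + (b-a)) (by omega)
    obtain ⟨n, f, h1', h2', h3', h4'⟩ := IH (k - (b - a)) hlt _ h1 hg'k hEg' hUg'
    refine ⟨n, f, h1', h2', ?_, h4'⟩
    rw [h3']
    show (if 0 ≤ a then g 0 else _) = g 0
    rw [if_pos (Nat.zero_le a)]

lemma splice {E : V → V → Prop} {S : Set V} {τ : V → V} {n : ℕ} {f : Fin (n+1) → V}
    (hf : ∀ i : Fin (n+1), E (f i) (f (i+1)) ∧ (f i ∈ S → f (i+1) = τ (f i)))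
    (P : ℕ → V) (i₀ : ℕ) (h0 : P i₀ = f 0)
    (hP : ∀ i < i₀, E (P i) (P (i+1)))
    (hC : ∀ i < i₀, P i ∈ S → P (i+1) = τ (P i)) :
    ∃ Q : ℕ → V, (∀ i : ℕ, E (Q i) (Q (i+1))) ∧ (∀ i, Q i ∈ S → Q (i+1) = τ (Q i)) ∧
      Q 0 = P 0 ∧ ∀ j : ℕ, Q (i₀ + j) = f ((j : Fin (n+1))) := by
  refine ⟨fun i => if i < i₀ then P i else f ((i - i₀ : ℕ) : Fin (n+1)), ?_, ?_, ?_, ?_⟩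
  · intro i
    show E (if i < i₀ then P i else f ((i - i₀ : ℕ) : Fin (n+1)))
      (if i + 1 < i₀ then P (i+1) else f ((i + 1 - i₀ : ℕ) : Fin (n+1)))
    rcases Nat.lt_or_ge (i+1) i₀ with h | h
    · rw [if_pos h, if_pos (by omega)]
      exact hP i (by omega)
    · rcases Nat.lt_or_ge i i₀ with h2 | h2
      · rw [if_pos h2, if_neg (by omega)]
        have e : i + 1 - i₀ = 0 := by omega
        rw [e, Nat.cast_zero, ← h0]
        have e2 : i₀ = i + 1 := by omega
        rw [e2]
        exact hP i h2
      · rw [if_neg (by omega), if_neg (by omega)]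
        have e : ((i + 1 - i₀ : ℕ) : Fin (n+1)) = ((i - i₀ : ℕ) : Fin (n+1)) + 1 := by
          have e2 : i + 1 - i₀ = (i - i₀) + 1 := by omega
          rw [e2]; push_cast; ring
        rw [e]
        exact (hf _).1
  · intro i hi
    have hi' : (if i < i₀ then P i else f ((i - i₀ : ℕ) : Fin (n+1))) ∈ S := hi
    clear hi
    show (if i + 1 < i₀ then P (i+1) else f ((i + 1 - i₀ : ℕ) : Fin (n+1)))
      = τ (if i < i₀ then P i else f ((i - i₀ : ℕ) : Fin (n+1)))
    rcases Nat.lt_or_ge (i+1) i₀ with h | h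
    · rw [if_pos h]
      have e1 : (if i < i₀ then P i else f ((i - i₀ : ℕ) : Fin (n+1))) = P i := if_pos (by omega)
      rw [e1] at hi' ⊢
      exact hC i (by omega) hi'
    · rcases Nat.lt_or_ge i i₀ with h2 | h2
      · rw [if_neg (by omega)]
        have e1 : (if i < i₀ then P i else f ((i - i₀ : ℕ) : Fin (n+1))) = P i := if_pos h2
        rw [e1] at hi' ⊢
        have e : i + 1 - i₀ = 0 := by omega
        rw [e, Nat.cast_zero, ← h0]
        have e2 : i₀ = i + 1 := by omega
        rw [e2]
        exact hC i h2 hi'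
      · rw [if_neg (by omega)]
        have e1 : (if i < i₀ then P i else f ((i - i₀ : ℕ) : Fin (n+1)))
            = f ((i - i₀ : ℕ) : Fin (n+1)) := if_neg (by omega)
        rw [e1] at hi' ⊢
        have e : ((i + 1 - i₀ : ℕ) : Fin (n+1)) = ((i - i₀ : ℕ) : Fin (n+1)) + 1 := by
          have e2 : i + 1 - i₀ = (i - i₀) + 1 := by omega
          rw [e2]; push_cast; ring
        rw [e]
        exact (hf _).2 hi'
  · show (if 0 < i₀ then P 0 else f ((0 - i₀ : ℕ) : Fin (n+1))) = P 0
    rcases Nat.eq_zero_or_pos i₀ with h | h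
    · rw [if_neg (by omega)]
      have e : 0 - i₀ = 0 := by omega
      rw [e, Nat.cast_zero, ← h0, h]
    · rw [if_pos h]
  · intro j
    show (if i₀ + j < i₀ then P (i₀ + j) else f ((i₀ + j - i₀ : ℕ) : Fin (n+1))) = f (j : Fin (n+1))
    rw [if_neg (by omega)]
    congr 2
    omega




lemma winsPlay_congr {c c' : V → ℕ} {P Q : ℕ → V} (s : Bool)
    (h : minInf c P % 2 = minInf c' Q % 2) : WinsPlay c s P ↔ WinsPlay c' s Q := by
  have he : Even (minInf c P) ↔ Even (minInf c' Q) := by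
    rw [Nat.even_iff, Nat.even_iff, h]
  cases s <;> simp [WinsPlay, he]

/-- Core transfer lemma: if `c` and `c'` agree in parity on simple cycles, then a
strategy that wins all its consistent plays from `v` under `c` also does so under `c'`. -/
lemma wins_transfer [Fintype V] [Nonempty V] {E : V → V → Prop} {c c' : V → ℕ}
    (hsc : SCEquiv E c c') (S : Set V) (τ : V → V) (s : Bool) (v : V)
    (hwin : ∀ P, IsPlay E P → P 0 = v → Consistent S τ P → WinsPlay c s P) :
    ∀ P, IsPlay E P → P 0 = v → Consistent S τ P → WinsPlay c' s P := by
  intro P hP h0 hcons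
  obtain ⟨T, hT⟩ := exists_tail_infVisit P
  have hne : (c' '' InfVisit P).Nonempty := (infVisit_nonempty P).image c'
  obtain ⟨w, hwU, hcw⟩ := Nat.sInf_mem hne
  obtain ⟨i₀, hi₀, hPi₀⟩ := hwU (max T 1)
  obtain ⟨i₁, hi₁, hPi₁⟩ := hwU i₀
  -- loop-erase the walk P i₀, …, P i₁ to a simple cycle through w
  obtain ⟨n, f, hfE, hfinj, hf0, hfU⟩ :=
    loop_erase (fun x y => E x y ∧ (x ∈ S → y = τ x)) (InfVisit P)
      (i₁ - i₀) (fun j => P (i₀ + j)) (by omega)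
      (by
        show P (i₀ + (i₁ - i₀)) = P (i₀ + 0)
        have e : i₀ + (i₁ - i₀) = i₁ := by omega
        rw [e, hPi₁, Nat.add_zero, hPi₀])
      (fun j _ => ⟨hP (i₀ + j), hcons (i₀ + j)⟩)
      (fun j _ => hT (i₀ + j) (by omega))
  have hf0' : f 0 = w := by rw [hf0, Nat.add_zero, hPi₀]
  have hsimp : IsSimpleCycle E n f := ⟨fun i => (hfE i).1, hfinj⟩
  -- the c'-color of the simple cycle is exactly minInf c' P
  have hcol : cColor c' f = minInf c' P := by
    rw [minInf_eq]
    refine le_antisymm ?_ ?_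
    · rw [← hcw, ← hf0']
      exact Nat.sInf_le ⟨0, rfl⟩
    · refine le_csInf ⟨_, 0, rfl⟩ ?_
      rintro b ⟨i, rfl⟩
      exact Nat.sInf_le ⟨f i, hfU i, rfl⟩
  -- splice P's prefix with the cycle
  obtain ⟨Q, hQE, hQC, hQ0, hQtail⟩ := splice hfE P i₀ (by rw [hPi₀, hf0'])
    (fun i _ => hP i) (fun i _ => hcons i)
  have hQwin : WinsPlay c s Q := hwin Q hQE (hQ0.trans h0) hQC
  have hQmin : minInf c Q = cColor c f :=
    minInf_cyc c f Q i₀ 0 (fun j => by rw [hQtail, zero_add])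
  have hpar : minInf c Q % 2 = minInf c' P % 2 := by
    rw [hQmin, ← hcol]
    exact hsc n f hsimp
  exact (winsPlay_congr s hpar).mp hQwin

/-- Core forward lemma: game equivalence forces parity transfer on simple cycles. -/
lemma even_transfer [Fintype V] [Nonempty V] {E : V → V → Prop}
    (hE : ∀ v : V, ∃ w : V, E v w) {c c' : V → ℕ}
    (hg : GameEquiv E c c') {n : ℕ} {f : Fin (n+1) → V} (hf : IsSimpleCycle E n f)
    (he : Even (cColor c f)) : Even (cColor c' f) := by
  classical
  -- the follow-the-cycle strategy
  have hτex : ∀ v : V, ∃ w, E v w ∧ ∀ i : Fin (n+1), f i = v → w = f (i+1) := by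
    intro v
    by_cases h : ∃ i, f i = v
    · obtain ⟨i, hi⟩ := h
      exact ⟨f (i+1), hi ▸ hf.1 i, fun j hj => by rw [hf.2 (hj.trans hi.symm)]⟩
    · exact ⟨(hE v).choose, (hE v).choose_spec, fun i hi => absurd ⟨i, hi⟩ h⟩
  choose τ hτE hτf using hτex
  have hps : playerSet (Set.range f) false = Set.range f := rfl
  have hτ : IsStrategy E (playerSet (Set.range f) false) τ := fun v _ => hτE v
  have hτstep : ∀ i : Fin (n+1), τ (f i) = f (i + 1) := fun i => hτf (f i) i rfl
  -- the canonical cyclic play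
  have hQplay : IsPlay E (fun i : ℕ => f (i : Fin (n+1))) := by
    intro i
    have e : ((i + 1 : ℕ) : Fin (n+1)) = (i : Fin (n+1)) + 1 := by push_cast; ring
    show E (f (i : Fin (n+1))) (f ((i+1 : ℕ) : Fin (n+1)))
    rw [e]
    exact hf.1 _
  have hQcons : Consistent (playerSet (Set.range f) false) τ (fun i : ℕ => f (i : Fin (n+1))) := by
    intro i _
    have e : ((i + 1 : ℕ) : Fin (n+1)) = (i : Fin (n+1)) + 1 := by push_cast; ring
    show f ((i+1 : ℕ) : Fin (n+1)) = τ (f (i : Fin (n+1)))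
    rw [e, hτstep]
  have hQ0 : (fun i : ℕ => f (i : Fin (n+1))) 0 = f 0 := by norm_num
  -- any play consistent with τ that hits the cycle follows it forever
  have htail : ∀ (P : ℕ → V), Consistent (playerSet (Set.range f) false) τ P →
      ∀ i (t : Fin (n+1)), P i = f t → ∀ j, P (i + j) = f (t + (j : Fin (n+1))) := by
    intro P hcons i t hPi j
    induction j with
    | zero => simpa using hPi
    | succ j ih =>
      have hmem : P (i + j) ∈ playerSet (Set.range f) false := by rw [hps, ih]; exact ⟨_, rfl⟩
      have e : ((j + 1 : ℕ) : Fin (n+1)) = (j : Fin (n+1)) + 1 := by push_cast; ring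
      have : P (i + (j + 1)) = τ (P (i + j)) := by
        rw [← hcons (i + j) hmem]; ring_nf
      rw [this, ih, hτstep, e, add_assoc]
  -- f 0 is in player 0's winning region for c
  have hregion : f 0 ∈ WinRegion E c (Set.range f) false := by
    refine ⟨τ, hτ, fun P hP h0 hcons => ?_⟩
    have hmin : minInf c P = cColor c f :=
      minInf_cyc c f P 0 0 (htail P hcons 0 0 (by simpa using h0))
    show WinsPlay c false P
    simp [WinsPlay, hmin, he]
  -- τ is a winning strategy for player 0 under c
  have hwinstrat : IsWinStrategy E c (Set.range f) false τ := by
    refine ⟨hτ, fun v hv P hP h0 hcons => ?_⟩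
    by_cases hhit : ∃ i t, P i = f t
    · obtain ⟨i, t, hit⟩ := hhit
      have hmin : minInf c P = cColor c f := minInf_cyc c f P i t (htail P hcons i t hit)
      show WinsPlay c false P
      simp [WinsPlay, hmin, he]
    · push_neg at hhit
      obtain ⟨σ, hσ, hσwin⟩ := hv
      exact hσwin P hP h0 (fun i hi => by
        rw [hps] at hi
        obtain ⟨t, ht⟩ := hi
        exact absurd ht.symm (hhit i t))
  -- transfer through game equivalence
  have hws' : IsWinStrategy E c' (Set.range f) false τ :=
    ((hg (Set.range f) false).2 τ).mp hwinstrat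
  have hreg' : f 0 ∈ WinRegion E c' (Set.range f) false := by
    rw [← (hg (Set.range f) false).1]; exact hregion
  have hwins := hws'.2 (f 0) hreg' _ hQplay hQ0 hQcons
  have hmin' : minInf c' (fun i : ℕ => f (i : Fin (n+1))) = cColor c' f :=
    minInf_cyc c' f _ 0 0 (fun j => by norm_num)
  simpa [WinsPlay, hmin'] using hwins


end RabinAux

/-- `c ≡ c'` iff every simple cycle has `c`- and `c'`-colors of
the same parity. -/
theorem rabin_index_equiv_iff_simple_cycle_parity
    {V : Type*} [Fintype V] [Nonempty V] (E : V → V → Prop)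
    (hE : ∀ v : V, ∃ w : V, E v w) (c c' : V → ℕ) :
    GameEquiv E c c' ↔ SCEquiv E c c' := by
  constructor
  · intro hg n f hf
    have hg' : GameEquiv E c' c := fun V0 s =>
      ⟨(hg V0 s).1.symm, fun τ => ((hg V0 s).2 τ).symm⟩
    rcases Nat.even_or_odd (cColor c f) with h | h
    · have h1 := RabinAux.even_transfer hE hg hf h
      rw [Nat.even_iff] at h h1
      omega
    · have h2 : ¬ Even (cColor c' f) := fun hc =>
        (Nat.not_even_iff_odd.mpr h) (RabinAux.even_transfer hE hg' hf hc)
      rw [Nat.odd_iff] at h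
      rw [Nat.even_iff] at h2
      omega
  · intro hsc V0 s
    have hsc' : SCEquiv E c' c := fun n f hf => (hsc n f hf).symm
    have hreg : WinRegion E c V0 s = WinRegion E c' V0 s := by
      ext v
      constructor
      · rintro ⟨τ, hτ, hwin⟩
        exact ⟨τ, hτ, RabinAux.wins_transfer hsc _ τ s v hwin⟩
      · rintro ⟨τ, hτ, hwin⟩
        exact ⟨τ, hτ, RabinAux.wins_transfer hsc' _ τ s v hwin⟩
    refine ⟨hreg, fun τ => ?_⟩
    constructor
    · rintro ⟨hτ, hwin⟩
      refine ⟨hτ, fun v hv => ?_⟩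
      exact RabinAux.wins_transfer hsc _ τ s v (hwin v (hreg ▸ hv))
    · rintro ⟨hτ, hwin⟩
      refine ⟨hτ, fun v hv => ?_⟩
      exact RabinAux.wins_transfer hsc' _ τ s v (hwin v (hreg ▸ hv))
end

section
/- Let (V,E) be a finite directed graph in which every node has at least one outgoing edge, and let c, c' : V → ℕ be coloring functions that are parity-equivalent on simple cycles. Then for every partition V = V₀ ∪ V₁, the parity games (V,V₀,V₁,E,c) and (V,V₀,V₁,E,c') have the same winning regions for both players, and a strategy is a winning strategy for player s in (V,V₀,V₁,E,c) if and only if it is a winning strategy for player s in (V,V₀,V₁,E,c'). -/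
open List in
lemma my_dedup {V : Type*} (R : V → V → Prop) : ∀ l : List V, l ≠ [] → l.Chain' R →
    ∃ l' : List V, l' ≠ [] ∧ l'.Chain' R ∧ l'.head? = l.head? ∧ l'.getLast? = l.getLast?
      ∧ l'.Nodup := by
  suffices H : ∀ (n : ℕ) (l : List V), l.length ≤ n → l ≠ [] → l.Chain' R →
      ∃ l' : List V, l' ≠ [] ∧ l'.Chain' R ∧ l'.head? = l.head? ∧ l'.getLast? = l.getLast?
      ∧ l'.Nodup from fun l => H l.length l le_rfl
  intro n
  induction n using Nat.strong_induction_on with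
  | _ n IH =>
  intro l hlen hne hch
  by_cases hnd : l.Nodup
  · exact ⟨l, hne, hch, rfl, rfl, hnd⟩
  rw [List.nodup_iff_injective_get] at hnd
  simp only [Function.Injective] at hnd
  push_neg at hnd
  obtain ⟨i, j, heq, hne'⟩ := hnd
  wlog hlt : (i : ℕ) < (j : ℕ) generalizing i j
  · exact this j i heq.symm (Ne.symm hne') (by omega)
  have hjm : (j : ℕ) < l.length := j.isLt
  have him : (i : ℕ) < l.length := i.isLt
  set A := l.take ((i : ℕ)+1) with hA
  set B := l.drop ((j : ℕ)+1) with hB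
  have lenA : A.length = (i : ℕ) + 1 := by simp [hA]
  have lenB : B.length = l.length - ((j : ℕ)+1) := by simp [hB]
  have hAne : A ≠ [] := by
    intro hc; rw [← List.length_eq_zero_iff] at hc; omega
  -- head
  have hhead : (A ++ B).head? = l.head? := by
    rw [List.head?_append, hA, List.head?_take, if_neg (by omega)]
    cases hl : l.head? with
    | none => simp [List.head?_eq_none_iff] at hl; exact absurd hl hne
    | some a => rfl
  -- getLast
  have hgetlastA : A.getLast? = some (l.get i) := by
    rw [List.getLast?_eq_getElem?, lenA]
    simp only [Nat.add_sub_cancel, hA, List.getElem?_take, if_pos (Nat.lt_succ_self _)]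
    rw [List.getElem?_eq_getElem him, List.get_eq_getElem]
  have hlast : (A ++ B).getLast? = l.getLast? := by
    rw [List.getLast?_append]
    rcases Nat.lt_or_ge ((j:ℕ)+1) l.length with hc | hc
    · have : B.getLast? = l.getLast? := by
        rw [hB, List.getLast?_eq_getElem?, List.getLast?_eq_getElem?, lenB,
          List.getElem?_drop]
        congr 1
        omega
      rw [this]
      have : ∃ a, l.getLast? = some a := by
        cases hl : l.getLast? with
        | none => rw [List.getLast?_eq_none_iff] at hl; exact absurd hl hne
        | some a => exact ⟨a, rfl⟩
      obtain ⟨a, ha⟩ := this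
      rw [ha]; rfl
    · have hBnil : B = [] := by
        rw [← List.length_eq_zero_iff, lenB]; omega
      rw [hBnil]
      simp only [List.getLast?_nil, Option.none_or]
      rw [hgetlastA, heq, List.getLast?_eq_getElem?, List.get_eq_getElem,
        List.getElem?_eq_getElem (by omega : l.length - 1 < l.length)]
      have hje : l.length - 1 = (j:ℕ) := by omega
      simp_rw [hje]
  -- chain
  have hchain : (A ++ B).Chain' R := by
    show (A ++ B).IsChain R
    rw [List.isChain_append]
    refine ⟨hch.take _, hch.drop _, ?_⟩
    intro x hx y hy
    rw [hgetlastA] at hx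
    simp only [Option.mem_def, Option.some.injEq] at hx
    rw [hB, List.head?_eq_getElem?, List.getElem?_drop] at hy
    rcases Nat.lt_or_ge ((j:ℕ)+1) l.length with hc | hc
    · rw [List.getElem?_eq_getElem (by omega : (j:ℕ)+1+0 < l.length)] at hy
      simp only [Option.mem_def, Option.some.injEq] at hy
      have hthis := List.isChain_iff_getElem.mp hch (j:ℕ) (by omega)
      have hxx : x = l.get ⟨(j:ℕ), by omega⟩ := by
        rw [← hx, heq]
      have hyy : y = l.get ⟨(j:ℕ)+1, by omega⟩ := by
        rw [← hy, List.get_eq_getElem]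
      rw [hxx, hyy]
      exact hthis
    · rw [List.getElem?_eq_none (by omega)] at hy
      exact absurd hy (by simp)
  have hlen' : (A ++ B).length < n := by
    rw [List.length_append, lenA, lenB]; omega
  obtain ⟨l', h1, h2, h3, h4, h5⟩ := IH (A ++ B).length hlen' (A ++ B) le_rfl
    (by intro hc; apply hAne; exact List.append_eq_nil_iff.mp hc |>.1) hchain
  exact ⟨l', h1, h2, h3.trans hhead, h4.trans hlast, h5⟩

lemma exists_simple_cycle_through {V : Type*} (R : V → V → Prop) {u' w : V}
    (hw : R u' w) (hpath : Relation.ReflTransGen R w u') :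
    ∃ (n : ℕ) (f : Fin (n + 1) → V), (∀ i : Fin (n+1), R (f i) (f (i+1)))
      ∧ Function.Injective f ∧ ∃ i, f i = u' := by
  obtain ⟨m, hchain, hlast⟩ := List.exists_isChain_cons_of_relationReflTransGen hpath
  have hch' : (w :: m).Chain' R := hchain
  obtain ⟨l', hne, hch, hhead, hlast', hnd⟩ := my_dedup R (w :: m) (by simp) hch'
  rw [List.head?_eq_head hne, List.head?_eq_head (by simp)] at hhead
  rw [List.getLast?_eq_getLast hne, List.getLast?_eq_getLast (l := w :: m) (by simp)] at hlast'
  simp only [Option.some.injEq, List.head_cons] at hhead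
  simp only [Option.some.injEq] at hlast'
  rw [hlast] at hlast'
  have hlp : 0 < l'.length := List.length_pos_iff.mpr hne
  set n := l'.length - 1 with hn
  have hlen : l'.length = n + 1 := by omega
  have getcongr : ∀ (a b : ℕ) (ha : a < l'.length) (hb : b < l'.length), a = b →
      l'[a] = l'[b] := by
    intro a b ha hb h
    subst h
    rfl
  have hu : l'[(n : ℕ)]'(by omega) = u' := by
    rw [← hlast', List.getLast_eq_getElem]
  have hw' : l'[(0 : ℕ)]'(by omega) = w := by
    rw [← hhead, List.head_eq_getElem]
  have key : ∀ (a : ℕ) (ha : a < l'.length - 1), R (l'[a]'(by omega)) (l'[a+1]'(by omega)) := by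
    intro a ha
    have := List.isChain_iff_getElem.mp hch a (by omega)
    simpa [List.get_eq_getElem] using this
  refine ⟨n, fun i => l'.get (Fin.cast hlen.symm i), ?_, ?_, ?_⟩
  · intro i
    simp only [List.get_eq_getElem, Fin.coe_cast]
    rcases eq_or_ne i (Fin.last n) with hi | hi
    · have h1 : ((i + 1 : Fin (n+1)) : ℕ) = 0 := by
        rw [Fin.val_add_one, if_pos hi]
      have h2 : (i : ℕ) = n := by rw [hi]; rfl
      rw [getcongr (i : ℕ) n (by omega) (by omega) h2,
        getcongr ((i+1 : Fin (n+1)) : ℕ) 0 (by omega) (by omega) h1, hu, hw']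
      exact hw
    · have h1 : ((i + 1 : Fin (n+1)) : ℕ) = (i : ℕ) + 1 := by
        rw [Fin.val_add_one, if_neg hi]
      have hib : (i : ℕ) < n := Fin.lt_last_iff_ne_last.mpr hi
      rw [getcongr ((i+1 : Fin (n+1)) : ℕ) ((i:ℕ)+1) (by omega) (by omega) h1]
      exact key (i : ℕ) (by omega)
  · intro a b hab
    have := List.nodup_iff_injective_get.mp hnd hab
    exact Fin.cast_injective _ (by exact this)
  · refine ⟨Fin.last n, ?_⟩
    show l'.get (Fin.cast hlen.symm (Fin.last n)) = u'
    rw [List.get_eq_getElem]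
    rw [getcongr _ n (by omega) (by omega) (by simp), hu]

lemma inf_iff_unbounded (s : Set ℕ) : s.Infinite ↔ ∀ j, ∃ i, j < i ∧ i ∈ s := by
  constructor
  · intro hs j
    obtain ⟨b, hb, hjb⟩ := hs.exists_gt j
    exact ⟨b, hjb, hb⟩
  · intro hs
    apply Set.infinite_of_forall_exists_gt
    intro a
    obtain ⟨i, h1, h2⟩ := hs a
    exact ⟨i, h2, h1⟩

lemma pigeon {V : Type*} [Finite V] (P : ℕ → V) (T : Set ℕ) (hT : T.Infinite) :
    ∃ v, {i | i ∈ T ∧ P i = v}.Infinite := by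
  haveI := hT.to_subtype
  obtain ⟨v, hv⟩ := Finite.exists_infinite_fiber (fun i : T => P i)
  rw [Set.infinite_coe_iff] at hv
  refine ⟨v, ?_⟩
  have himg : (Subtype.val '' ((fun i : T => P i) ⁻¹' {v})).Infinite :=
    hv.image (Set.injOn_of_injective Subtype.val_injective)
  apply Set.Infinite.mono ?_ himg
  rintro i ⟨⟨i', hi'T⟩, hi'v, rfl⟩
  exact ⟨hi'T, hi'v⟩

open Fin.NatCast in
lemma fin_cast_add_mul (n a t : ℕ) : ((a + (n+1)*t : ℕ) : Fin (n+1)) = ((a : ℕ) : Fin (n+1)) := by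
  induction t with
  | zero => simp
  | succ t ih =>
    have : a + (n+1)*(t+1) = (a + (n+1)*t) + (n+1) := by ring
    rw [this, Nat.cast_add, ih, Fin.natCast_self, add_zero]

open Fin.NatCast in
lemma winsPlay_transfer {V : Type*} [Fintype V] (E : V → V → Prop) (c c' : V → ℕ)
    (h : SCEquiv E c c') (S : Set V) (τ : V → V) (s : Bool) (v : V)
    (hwin : ∀ P : ℕ → V, IsPlay E P → P 0 = v → Consistent S τ P → WinsPlay c s P) :
    ∀ P : ℕ → V, IsPlay E P → P 0 = v → Consistent S τ P → WinsPlay c' s P := by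
  intro P hP h0 hcons
  set U : Set V := {u | ∀ j, ∃ i, j < i ∧ P i = u} with hU
  have hUchar : ∀ u, u ∈ U ↔ {i | P i = u}.Infinite := by
    intro u
    exact Iff.symm (inf_iff_unbounded {i | P i = u})
  have hTfin : {i | P i ∉ U}.Finite := by
    have hsub : {i | P i ∉ U} ⊆ ⋃ u ∈ {u : V | u ∉ U}, {i | P i = u} := by
      intro i hi
      simp only [Set.mem_iUnion]
      exact ⟨P i, hi, rfl⟩
    refine Set.Finite.subset (Set.Finite.biUnion (Set.toFinite _) ?_) hsub
    intro u hu
    rw [← Set.not_infinite]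
    intro hinf
    exact hu ((hUchar u).mpr hinf)
  obtain ⟨N₀, hN₀⟩ := hTfin.bddAbove
  set N := N₀ + 1 with hNdef
  have hNU : ∀ i, N ≤ i → P i ∈ U := by
    intro i hi
    by_contra hc
    have := hN₀ hc
    omega
  set E' : V → V → Prop := fun a b => ∃ i, N ≤ i ∧ P i = a ∧ P (i+1) = b with hE'
  have hE'E : ∀ a b, E' a b → E a b := by
    rintro a b ⟨i, hi, ha, hb⟩
    rw [← ha, ← hb]
    exact hP i
  have hE'U : ∀ a b, E' a b → a ∈ U := by
    rintro a b ⟨i, hi, ha, hb⟩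
    rw [← ha]
    exact hNU i hi
  have hE'τ : ∀ a b, E' a b → a ∈ S → b = τ a := by
    rintro a b ⟨i, hi, ha, hb⟩ haS
    rw [← ha, ← hb]
    exact hcons i (by rw [ha]; exact haS)
  have hreach : ∀ i j, N ≤ i → i ≤ j → Relation.ReflTransGen E' (P i) (P j) := by
    intro i j hNi hij
    induction j, hij using Nat.le_induction with
    | base => exact .refl
    | succ j hij ih => exact ih.tail ⟨j, by omega, rfl, rfl⟩
  have hconn : ∀ a ∈ U, ∀ b ∈ U, Relation.ReflTransGen E' a b := by
    intro a ha b hb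
    obtain ⟨i, hNi, hPi⟩ := ha N
    obtain ⟨j, hij, hPj⟩ := hb i
    rw [← hPi, ← hPj]
    exact hreach i j (by omega) (by omega)
  have hcyc : ∀ (n : ℕ) (f : Fin (n+1) → V), (∀ i, E' (f i) (f (i+1))) →
      Function.Injective f →
      (if s then ¬ Even (cColor c f) else Even (cColor c f)) := by
    intro n f hf hinj
    have hf0U : f 0 ∈ U := hE'U _ _ (hf 0)
    obtain ⟨m, hNm, hPm⟩ := hf0U N
    have hm : N ≤ m := le_of_lt hNm
    set Q : ℕ → V := fun k => if k ≤ m then P k else f ((k - m : ℕ) : Fin (n+1)) with hQdef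
    have hQle : ∀ k, k ≤ m → Q k = P k := by
      intro k hk
      simp only [hQdef, if_pos hk]
    have hQge : ∀ k, m ≤ k → Q k = f ((k - m : ℕ) : Fin (n+1)) := by
      intro k hk
      rcases eq_or_lt_of_le hk with heq | hlt
      · rw [← heq, hQle m le_rfl, hPm]
        simp
      · simp only [hQdef, if_neg (by omega : ¬ k ≤ m)]
    have hQstep : ∀ k, m ≤ k → Q (k+1) = f (((k - m : ℕ) : Fin (n+1)) + 1) := by
      intro k hk
      rw [hQge (k+1) (by omega)]
      congr 1
      have he : k + 1 - m = (k - m) + 1 := by omega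
      rw [he, Nat.cast_add, Nat.cast_one]
    have hQplay : IsPlay E Q := by
      intro k
      rcases Nat.lt_or_ge k m with hk | hk
      · rw [hQle k (by omega), hQle (k+1) (by omega)]
        exact hP k
      · rw [hQge k hk, hQstep k hk]
        exact hE'E _ _ (hf _)
    have hQ0 : Q 0 = v := by rw [hQle 0 (by omega), h0]
    have hQcons : Consistent S τ Q := by
      intro k hkS
      rcases Nat.lt_or_ge k m with hk | hk
      · rw [hQle k (by omega)] at hkS
        rw [hQle k (by omega), hQle (k+1) (by omega)]
        exact hcons k hkS
      · rw [hQge k hk] at hkS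
        rw [hQge k hk, hQstep k hk]
        exact hE'τ _ _ (hf _) hkS
    have hmin : minInf c Q = cColor c f := by
      have hset : {k | ∀ j, ∃ i, j < i ∧ c (Q i) = k} = Set.range (fun i => c (f i)) := by
        ext k
        constructor
        · intro hk
          obtain ⟨i, hmi, hci⟩ := hk m
          rw [hQge i (by omega)] at hci
          exact ⟨_, hci⟩
        · rintro ⟨i₀, hi₀⟩ j
          have hgt : j < (n+1)*(j+1) := by
            calc j < j + 1 := by omega
            _ ≤ (n+1)*(j+1) := Nat.le_mul_of_pos_left _ (by omega)
          refine ⟨m + (i₀ : ℕ) + (n+1)*(j+1), by omega, ?_⟩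
          rw [hQge _ (by omega)]
          have harith : m + (i₀:ℕ) + (n+1)*(j+1) - m = (i₀:ℕ) + (n+1)*(j+1) := by omega
          rw [harith, fin_cast_add_mul, Fin.cast_val_eq_self]
          exact hi₀
      rw [minInf, hset, cColor]
    have hq := hwin Q hQplay hQ0 hQcons
    rw [WinsPlay, hmin] at hq
    exact hq
  have hUne : ∃ u, u ∈ U := by
    obtain ⟨u, hu⟩ := pigeon P Set.univ Set.infinite_univ
    refine ⟨u, (hUchar u).mpr (hu.mono ?_)⟩
    intro i hi
    exact hi.2
  have hset' : {k | ∀ j, ∃ i, j < i ∧ c' (P i) = k} = c' '' U := by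
    ext k
    constructor
    · intro hk
      have hinf : {i | c' (P i) = k}.Infinite := (inf_iff_unbounded _).mpr hk
      obtain ⟨u, hu⟩ := pigeon P _ hinf
      have huU : u ∈ U := (hUchar u).mpr (hu.mono fun i hi => hi.2)
      obtain ⟨i, hiT, hiP⟩ := hu.nonempty
      exact ⟨u, huU, by rw [← hiP]; exact hiT⟩
    · rintro ⟨u, huU, rfl⟩ j
      obtain ⟨i, hji, hPi⟩ := huU j
      exact ⟨i, hji, by rw [hPi]⟩
  obtain ⟨u, huU⟩ := hUne
  have hAne : (c' '' U).Nonempty := ⟨c' u, u, huU, rfl⟩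
  have hmem : minInf c' P ∈ c' '' U := by
    rw [minInf, hset']
    exact Nat.sInf_mem hAne
  obtain ⟨u', hu'U, hu'⟩ := hmem
  have hlb : ∀ x ∈ U, minInf c' P ≤ c' x := by
    intro x hx
    rw [minInf, hset']
    exact Nat.sInf_le ⟨x, hx, rfl⟩
  obtain ⟨i₁, hNi₁, hPi₁⟩ := hu'U N
  have hedge : E' u' (P (i₁+1)) := ⟨i₁, by omega, hPi₁, rfl⟩
  have hwUmem : P (i₁+1) ∈ U := hNU _ (by omega)
  obtain ⟨n, f, hf, hinj, i₀, hfi₀⟩ :=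
    exists_simple_cycle_through E' hedge (hconn _ hwUmem _ hu'U)
  have hfU : ∀ i, f i ∈ U := fun i => hE'U _ _ (hf i)
  have hcol : cColor c' f = minInf c' P := by
    apply le_antisymm
    · apply Nat.sInf_le
      refine ⟨i₀, ?_⟩
      show c' (f i₀) = _
      rw [hfi₀, hu']
    · show minInf c' P ≤ sInf (Set.range fun i => c' (f i))
      refine le_csInf ⟨c' (f i₀), ⟨i₀, rfl⟩⟩ ?_
      rintro b ⟨i, rfl⟩
      exact hlb _ (hfU i)
  have hsc : IsSimpleCycle E n f := ⟨fun i => hE'E _ _ (hf i), hinj⟩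
  have hpar := h n f hsc
  have hparc := hcyc n f hf hinj
  have heven : Even (cColor c f) ↔ Even (minInf c' P) := by
    rw [Nat.even_iff, Nat.even_iff, hpar, hcol]
  rw [WinsPlay]
  cases s with
  | false =>
    simp only [if_neg Bool.false_ne_true] at hparc ⊢
    exact heven.mp hparc
  | true =>
    simp only [if_pos rfl] at hparc ⊢
    exact fun hc => hparc (heven.mpr hc)

/-- If `c` and `c'` are parity-equivalent on simple cycles, then for
every partition the induced parity games have the same winning regions and the same
winning strategies for both players. -/

theorem simple_cycle_parity_implies_game_equiv
    {V : Type*} [Fintype V] [Nonempty V] (E : V → V → Prop)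
    (hE : ∀ v : V, ∃ w : V, E v w) (c c' : V → ℕ)
    (h : SCEquiv E c c') :
    ∀ (V0 : Set V) (s : Bool),
      WinRegion E c V0 s = WinRegion E c' V0 s ∧
      ∀ τ : V → V, IsWinStrategy E c V0 s τ ↔ IsWinStrategy E c' V0 s τ := by
  have hsym : SCEquiv E c' c := fun n f hf => (h n f hf).symm
  intro V0 s
  have hreg : WinRegion E c V0 s = WinRegion E c' V0 s := by
    ext v
    constructor
    · rintro ⟨τ, hτ, hw⟩
      exact ⟨τ, hτ, winsPlay_transfer E c c' h _ τ s v hw⟩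
    · rintro ⟨τ, hτ, hw⟩
      exact ⟨τ, hτ, winsPlay_transfer E c' c hsym _ τ s v hw⟩
  refine ⟨hreg, ?_⟩
  intro τ
  constructor
  · rintro ⟨hτ, hw⟩
    refine ⟨hτ, ?_⟩
    intro v hv P
    rw [← hreg] at hv
    exact winsPlay_transfer E c c' h _ τ s v (hw v hv) P
  · rintro ⟨hτ, hw⟩
    refine ⟨hτ, ?_⟩
    intro v hv P
    rw [hreg] at hv
    exact winsPlay_transfer E c' c hsym _ τ s v (hw v hv) P
end

section
/- Let (V,E) be a finite directed graph in which every node has at least one outgoing edge, and let c, c' : V → ℕ be coloring functions with c ≡ c'. Then for every simple cycle C in (V,E), the c-color of C and the c'-color of C are congruent modulo 2. -/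
section AuxLemmas

variable {V : Type*}

open Fin.NatCast Fin.CommRing

/-- If a play is consistent with the cycle-following strategy and ever hits the cycle,
then its min-inf color is the cycle's color. -/
lemma cyclic_minInf {n : ℕ} (f : Fin (n + 1) → V) (hinj : Function.Injective f)
    (σ : V → V) (hσ : ∀ i, σ (f i) = f (i + 1))
    (d : V → ℕ) (P : ℕ → V) (hP : Consistent (Set.range f) σ P)
    (i₀ : ℕ) (j : Fin (n + 1)) (h0 : P i₀ = f j) :
    minInf d P = cColor d f := by
  have key : ∀ t : ℕ, P (i₀ + t) = f (j + (t : Fin (n + 1))) := by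
    intro t
    induction t with
    | zero => simpa using h0
    | succ t ih =>
      have hmem : P (i₀ + t) ∈ Set.range f := ⟨j + (t : Fin (n + 1)), ih.symm⟩
      have hstep := hP (i₀ + t) hmem
      rw [show i₀ + (t + 1) = (i₀ + t) + 1 by ring, hstep, ih, hσ]
      congr 1
      push_cast
      ring
  have hset : {k | ∀ m, ∃ i, m < i ∧ d (P i) = k} = Set.range (fun i => d (f i)) := by
    ext k
    constructor
    · intro hk
      obtain ⟨i, hi, hdi⟩ := hk i₀
      have hPi : P i = f (j + ((i - i₀ : ℕ) : Fin (n + 1))) := by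
        have := key (i - i₀)
        rwa [show i₀ + (i - i₀) = i by omega] at this
      refine ⟨j + ((i - i₀ : ℕ) : Fin (n + 1)), ?_⟩
      show d (f _) = k
      rw [← hPi]; exact hdi
    · rintro ⟨m, rfl⟩ b
      set t₀ : ℕ := ((m - j : Fin (n + 1)) : ℕ) with ht₀
      refine ⟨i₀ + (t₀ + (b + 1) * (n + 1)), by nlinarith, ?_⟩
      rw [key]
      congr 2
      have h1 : ((t₀ + (b + 1) * (n + 1) : ℕ) : Fin (n + 1)) = m - j := by
        push_cast
        simp [ht₀, Fin.cast_val_eq_self]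
      rw [h1]
      ring
  unfold minInf cColor
  rw [hset]

/-- Core argument: if `c` is even and `c'` odd on a simple cycle, `GameEquiv` fails. -/
lemma aux_false (E : V → V → Prop) (hE : ∀ v : V, ∃ w : V, E v w)
    (c c' : V → ℕ) (h : GameEquiv E c c')
    {n : ℕ} {f : Fin (n + 1) → V} (hsc : IsSimpleCycle E n f)
    (he : Even (cColor c f)) (ho : ¬ Even (cColor c' f)) : False := by
  classical
  obtain ⟨hcyc, hinj⟩ := hsc
  set σ : V → V :=
    Function.extend f (fun i => f (i + 1)) (fun v => Classical.choose (hE v)) with hσdef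
  have hσ : ∀ i, σ (f i) = f (i + 1) := fun i => hinj.extend_apply _ _ i
  set V0 : Set V := (Set.range f)ᶜ with hV0
  have hps : playerSet V0 true = Set.range f := by simp [playerSet, hV0]
  have hstrat : IsStrategy E (playerSet V0 true) σ := by
    rw [hps]; rintro v ⟨i, rfl⟩; rw [hσ]; exact hcyc i
  have hplays : ∀ (d : V → ℕ) (P : ℕ → V), Consistent (Set.range f) σ P →
      (∃ i j, P i = f j) → minInf d P = cColor d f := by
    rintro d P hP ⟨i, j, hij⟩
    exact cyclic_minInf f hinj σ hσ d P hP i j hij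
  have hwin' : IsWinStrategy E c' V0 true σ := by
    refine ⟨hstrat, ?_⟩
    intro v hv P hPlay hP0 hCons
    rw [hps] at hCons
    by_cases hhit : ∃ i j, P i = f j
    · have hmi := hplays c' P hCons hhit
      simp only [WinsPlay, if_true, hmi]
      exact ho
    · obtain ⟨τ, hτ, hτw⟩ := hv
      have hConsτ : Consistent (playerSet V0 true) τ P := by
        rw [hps]
        intro i hi
        obtain ⟨j, hj⟩ := hi
        exact absurd ⟨i, j, hj.symm⟩ hhit
      exact hτw P hPlay hP0 hConsτ
  have hwin : IsWinStrategy E c V0 true σ := ((h V0 true).2 σ).mpr hwin'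
  have hmem' : f 0 ∈ WinRegion E c' V0 true := by
    refine ⟨σ, hstrat, ?_⟩
    intro P hPlay hP0 hCons
    rw [hps] at hCons
    have hmi := hplays c' P hCons ⟨0, 0, hP0⟩
    simp only [WinsPlay, if_true, hmi]
    exact ho
  have hmem : f 0 ∈ WinRegion E c V0 true := by
    rw [(h V0 true).1]; exact hmem'
  set Pc : ℕ → V := fun i => f ((i : ℕ) : Fin (n + 1)) with hPc
  have hcast : ∀ i : ℕ, ((i + 1 : ℕ) : Fin (n + 1)) = ((i : ℕ) : Fin (n + 1)) + 1 := by
    intro i; push_cast; ring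
  have hPlayc : IsPlay E Pc := by
    intro i
    simp only [hPc]
    rw [hcast]
    exact hcyc _
  have hConsc : Consistent (playerSet V0 true) σ Pc := by
    rw [hps]
    intro i _
    simp only [hPc]
    rw [hcast, hσ]
  have hc0 : Pc 0 = f 0 := by simp [hPc]
  have hwinplay := hwin.2 (f 0) hmem Pc hPlayc hc0 hConsc
  have hmi : minInf c Pc = cColor c f := by
    apply hplays c Pc _ ⟨0, 0, hc0⟩
    rw [← hps]; exact hConsc
  simp only [WinsPlay, if_true, hmi] at hwinplay
  exact hwinplay he

end AuxLemmas

/-- If `c ≡ c'` then every simple cycle has `c`- and `c'`-colors of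
the same parity. -/
theorem game_equiv_implies_simple_cycle_parity
    {V : Type*} [Fintype V] [Nonempty V] (E : V → V → Prop)
    (hE : ∀ v : V, ∃ w : V, E v w) (c c' : V → ℕ)
    (h : GameEquiv E c c') :
    ∀ (n : ℕ) (f : Fin (n + 1) → V), IsSimpleCycle E n f →
      cColor c f % 2 = cColor c' f % 2 := by
  intro n f hsc
  have hsymm : GameEquiv E c' c := fun V0 s =>
    ⟨((h V0 s).1).symm, fun τ => ((h V0 s).2 τ).symm⟩
  rcases Nat.mod_two_eq_zero_or_one (cColor c f) with h1 | h1 <;>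
    rcases Nat.mod_two_eq_zero_or_one (cColor c' f) with h2 | h2
  · exact h1.trans h2.symm
  · exact absurd (aux_false E hE c c' h hsc (Nat.even_iff.mpr h1)
      (by rw [Nat.even_iff, h2]; simp)) (by simp)
  · exact absurd (aux_false E hE c' c hsymm hsc (Nat.even_iff.mpr h2)
      (by rw [Nat.even_iff, h1]; simp)) (by simp)
  · exact h1.trans h2.symm
end

section
/- Let (V,E,c) be a colored arena. For every cycle C in (V,E) there exists a simple cycle C' all of whose edges belong to the edges traversed by C, which contains a node whose c-color is minimal on C, and whose c-color equals the c-color of C. -/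
lemma edge_helper' {V : Type*} {n : ℕ} (f : Fin (n+1) → V)
    {s : Fin (n+1)} {L : ℕ} (hL : L < n)
    (hclose : f (s + ⟨L+1, by omega⟩) = f s) :
    ∀ i : Fin (L+1), ∃ j : Fin (n+1),
      f (s + ⟨i.val, Nat.lt_of_lt_of_le i.isLt (by omega)⟩) = f j ∧
      f (s + ⟨(i+1).val, Nat.lt_of_lt_of_le (i+1).isLt (by omega)⟩) = f (j+1) := by
  have e1 : (1 : Fin (n+1)).val = 1 := by
    rw [Fin.val_one']; exact Nat.mod_eq_of_lt (by omega)
  intro i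
  rcases Nat.lt_or_ge i.val L with h | h
  · refine ⟨s + ⟨i.val, Nat.lt_of_lt_of_le i.isLt (by omega)⟩, rfl, ?_⟩
    have hiv : (i+1).val = i.val + 1 :=
      Fin.val_add_one_of_lt (by simp [Fin.lt_def, Fin.val_last]; omega)
    congr 1
    apply Fin.ext
    simp only [hiv]
    simp only [Fin.add_def, Fin.val_mk, e1]
    rw [Nat.mod_add_mod, Nat.add_assoc]
  · have hiL : i.val = L := by omega
    have hi1 : (i+1).val = 0 := by
      have : i = Fin.last L := Fin.ext (by simpa using hiL)
      rw [this, Fin.last_add_one]; rfl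
    refine ⟨s + ⟨L, by omega⟩, ?_, ?_⟩
    · congr 1; apply Fin.ext
      simp only [Fin.add_def, Fin.val_mk, hiL]
    · have h0 : f (s + (⟨(i+1).val, Nat.lt_of_lt_of_le (i+1).isLt (by omega)⟩ : Fin (n+1))) = f s := by
        congr 1; apply Fin.ext
        simp only [hi1]
        simp only [Fin.add_def, Fin.val_mk]
        simp [Nat.mod_eq_of_lt s.isLt]
      rw [h0, ← hclose]
      congr 1
      apply Fin.ext
      simp only [Fin.add_def, Fin.val_mk, e1]
      rw [Nat.mod_add_mod, Nat.add_assoc]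

lemma cColor_eq_of' {V : Type*} (c : V → ℕ) {n m : ℕ} {f : Fin (n+1) → V} {g : Fin (m+1) → V}
    (hsub : ∀ i, ∃ j, g i = f j) {i₀ : Fin (n+1)} (hmem : ∃ i, g i = f i₀)
    (hmin : c (f i₀) = cColor c f) : cColor c g = cColor c f := by
  apply le_antisymm
  · obtain ⟨i, hi⟩ := hmem
    calc cColor c g ≤ c (g i) := Nat.sInf_le ⟨i, rfl⟩
      _ = cColor c f := by rw [hi, hmin]
  · apply le_csInf (Set.range_nonempty _)
    rintro x ⟨i, rfl⟩
    obtain ⟨j, hj⟩ := hsub i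
    show cColor c f ≤ c (g i)
    rw [hj]
    exact Nat.sInf_le ⟨j, rfl⟩

lemma main_aux' {V : Type*} (E : V → V → Prop) (c : V → ℕ) :
    ∀ n : ℕ, ∀ f : Fin (n+1) → V, IsCycle E n f →
      ∃ (m : ℕ) (g : Fin (m+1) → V), (IsCycle E m g ∧ Function.Injective g) ∧
        (∀ i : Fin (m+1), ∃ j : Fin (n+1), g i = f j ∧ g (i+1) = f (j+1)) ∧
        cColor c g = cColor c f := by
  intro n
  induction n using Nat.strong_induction_on with
  | _ n ih =>
    intro f hf
    by_cases hinj : Function.Injective f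
    · exact ⟨n, f, ⟨hf, hinj⟩, fun i => ⟨i, rfl, rfl⟩, rfl⟩
    · have hab : ∃ a b : Fin (n+1), a.val < b.val ∧ f a = f b := by
        simp only [Function.Injective] at hinj
        push_neg at hinj
        obtain ⟨a, b, h1, h2⟩ := hinj
        have : a.val ≠ b.val := fun hv => h2 (Fin.ext hv)
        rcases Nat.lt_or_ge a.val b.val with h | h
        · exact ⟨a, b, h, h1⟩
        · exact ⟨b, a, by omega, h1.symm⟩
      obtain ⟨a, b, hlt, hab⟩ := hab
      have hbn : b.val ≤ n := by omega
      have hn1 : 1 ≤ n := by omega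
      obtain ⟨i₀, hi₀⟩ : ∃ i₀, c (f i₀) = cColor c f :=
        Nat.sInf_mem (Set.range_nonempty (fun i => c (f i)))
      set d : ℕ := b.val - a.val with hd
      have hd1 : 1 ≤ d := by omega
      by_cases hcase : a.val ≤ i₀.val ∧ i₀.val < b.val
      · -- half 1: indices a .. b-1, length d, param L = d-1
        have hL : d - 1 < n := by omega
        have hcl : f (a + ⟨(d-1)+1, by omega⟩) = f a := by
          have heq : a + (⟨(d-1)+1, by omega⟩ : Fin (n+1)) = b := by
            apply Fin.ext
            simp only [Fin.add_def, Fin.val_mk]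
            rw [Nat.mod_eq_of_lt (by omega)]
            omega
          rw [heq, ← hab]
        have hedge := edge_helper' f hL hcl
        set f' : Fin ((d-1)+1) → V :=
          fun i => f (a + ⟨i.val, Nat.lt_of_lt_of_le i.isLt (by omega)⟩) with hf'def
        have hf'c : IsCycle E (d-1) f' := by
          intro i
          obtain ⟨j, h1, h2⟩ := hedge i
          have e1 : f' i = f j := h1
          have e2 : f' (i+1) = f (j+1) := h2
          rw [e1, e2]; exact hf j
        obtain ⟨m, g, hs, hsub, hcol⟩ := ih (d-1) hL f' hf'c
        have hwit : ∃ t : Fin ((d-1)+1), f' t = f i₀ := by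
          refine ⟨⟨i₀.val - a.val, by omega⟩, ?_⟩
          show f (a + ⟨i₀.val - a.val, _⟩) = f i₀
          congr 1
          apply Fin.ext
          simp only [Fin.add_def, Fin.val_mk]
          rw [Nat.mod_eq_of_lt (by omega)]
          omega
        have hcc : cColor c f' = cColor c f :=
          cColor_eq_of' c (fun i => ⟨_, rfl⟩) hwit hi₀
        refine ⟨m, g, hs, fun i => ?_, hcol.trans hcc⟩
        obtain ⟨j', h1, h2⟩ := hsub i
        obtain ⟨j, h3, h4⟩ := hedge j'
        exact ⟨j, h1.trans h3, h2.trans h4⟩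
      · -- half 2: indices b .. n, 0 .. a-1, length n+1-d, param L = n-d
        have hL : n - d < n := by omega
        have hcl : f (b + ⟨(n-d)+1, by omega⟩) = f b := by
          have heq : b + (⟨(n-d)+1, by omega⟩ : Fin (n+1)) = a := by
            apply Fin.ext
            simp only [Fin.add_def, Fin.val_mk]
            rw [show b.val + (n-d+1) = a.val + (n+1) by omega, Nat.add_mod_right]
            exact Nat.mod_eq_of_lt (by omega)
          rw [heq, hab]
        have hedge := edge_helper' f hL hcl
        set f' : Fin ((n-d)+1) → V :=
          fun i => f (b + ⟨i.val, Nat.lt_of_lt_of_le i.isLt (by omega)⟩) with hf'def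
        have hf'c : IsCycle E (n-d) f' := by
          intro i
          obtain ⟨j, h1, h2⟩ := hedge i
          have e1 : f' i = f j := h1
          have e2 : f' (i+1) = f (j+1) := h2
          rw [e1, e2]; exact hf j
        obtain ⟨m, g, hs, hsub, hcol⟩ := ih (n-d) hL f' hf'c
        have hwit : ∃ t : Fin ((n-d)+1), f' t = f i₀ := by
          rcases (show i₀.val < a.val ∨ b.val ≤ i₀.val by omega) with h | h
          · refine ⟨⟨n + 1 - b.val + i₀.val, by omega⟩, ?_⟩
            show f (b + ⟨n + 1 - b.val + i₀.val, _⟩) = f i₀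
            congr 1
            apply Fin.ext
            simp only [Fin.add_def, Fin.val_mk]
            rw [show b.val + (n + 1 - b.val + i₀.val) = i₀.val + (n+1) by omega,
              Nat.add_mod_right]
            exact Nat.mod_eq_of_lt (by omega)
          · refine ⟨⟨i₀.val - b.val, by omega⟩, ?_⟩
            show f (b + ⟨i₀.val - b.val, _⟩) = f i₀
            congr 1
            apply Fin.ext
            simp only [Fin.add_def, Fin.val_mk]
            rw [Nat.mod_eq_of_lt (by omega)]
            omega
        have hcc : cColor c f' = cColor c f :=
          cColor_eq_of' c (fun i => ⟨_, rfl⟩) hwit hi₀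
        refine ⟨m, g, hs, fun i => ?_, hcol.trans hcc⟩
        obtain ⟨j', h1, h2⟩ := hsub i
        obtain ⟨j, h3, h4⟩ := hedge j'
        exact ⟨j, h1.trans h3, h2.trans h4⟩

/-- Every cycle contains a simple cycle using only its edges, passing
through a node of minimal color on the original cycle, and with the same color. -/
theorem cycle_contains_simple_cycle_same_color
    {V : Type*} [Fintype V] [Nonempty V] (E : V → V → Prop)
    (hE : ∀ v : V, ∃ w : V, E v w) (c : V → ℕ)
    (n : ℕ) (f : Fin (n + 1) → V) (hf : IsCycle E n f) :
    ∃ (m : ℕ) (g : Fin (m + 1) → V),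
      IsSimpleCycle E m g ∧
      (∀ i : Fin (m + 1), ∃ j : Fin (n + 1), g i = f j ∧ g (i + 1) = f (j + 1)) ∧
      (∃ i : Fin (m + 1), c (g i) = cColor c f) ∧
      cColor c g = cColor c f := by
  obtain ⟨m, g, hs, hsub, hcol⟩ := main_aux' E c n f hf
  refine ⟨m, g, hs, hsub, ?_, hcol⟩
  obtain ⟨i, hi⟩ : ∃ i, c (g i) = cColor c g :=
    Nat.sInf_mem (Set.range_nonempty (fun i => c (g i)))
  exact ⟨i, hi.trans hcol⟩
end

section
/- Let (V,E,c) be a colored arena such that (1) there is a cycle in (V,E) whose c-color equals the maximal color μ(c) = max_{v∈V} c(v), and (2) every node v with c(v) > 1 lies on a cycle whose c-color is c(v) − 1. Then there is no coloring function c' : V → ℕ with c ≡α c' and μ(c') < μ(c); consequently μ(c) equals the abstract Rabin index RIα(c). -/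
lemma cColor_le_apply {V : Type*} (c : V → ℕ) {n : ℕ} (f : Fin (n + 1) → V) (i : Fin (n + 1)) :
    cColor c f ≤ c (f i) := Nat.sInf_le ⟨i, rfl⟩

lemma exists_cColor_eq {V : Type*} (c : V → ℕ) {n : ℕ} (f : Fin (n + 1) → V) :
    ∃ i, c (f i) = cColor c f :=
  Nat.sInf_mem (Set.range_nonempty _)

lemma le_cColor {V : Type*} (c : V → ℕ) {n : ℕ} (f : Fin (n + 1) → V) (k : ℕ)
    (h : ∀ i, k ≤ c (f i)) : k ≤ cColor c f := by
  obtain ⟨i, hi⟩ := exists_cColor_eq c f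
  exact hi ▸ h i

lemma isCycle_rot {V : Type*} {E : V → V → Prop} {n : ℕ} {f : Fin (n + 1) → V}
    (hf : IsCycle E n f) (a : Fin (n + 1)) : IsCycle E n (fun t => f (a + t)) := by
  intro i
  have := hf (a + i)
  simpa [add_assoc] using this

/-- Gluing two cycles that share their base point. -/
def glueFun {V : Type*} {n m : ℕ} (f : Fin (n + 1) → V) (g : Fin (m + 1) → V) :
    Fin (n + m + 1 + 1) → V :=
  fun k => if h : (k : ℕ) < n + 1 then f ⟨k, h⟩
    else g ⟨(k : ℕ) - (n + 1), by have := k.isLt; omega⟩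

lemma fin_succ_val {N : ℕ} (k : Fin (N + 1)) :
    ((k + 1 : Fin (N + 1)) : ℕ) = if (k : ℕ) = N then 0 else (k : ℕ) + 1 := by
  rw [Fin.val_add_one]
  congr 1
  simp [Fin.ext_iff, Fin.last]

lemma glue_isCycle {V : Type*} {E : V → V → Prop} {n m : ℕ}
    {f : Fin (n + 1) → V} {g : Fin (m + 1) → V}
    (hf : IsCycle E n f) (hg : IsCycle E m g) (hfg : f 0 = g 0) :
    IsCycle E (n + m + 1) (glueFun f g) := by
  intro k
  have hk := k.isLt
  have hs := fin_succ_val k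
  rcases hsucc : (k + 1 : Fin (n + m + 1 + 1)) with ⟨kv, hkv⟩
  rw [hsucc] at hs
  rcases lt_trichotomy (k : ℕ) n with h1 | h1 | h1
  · rw [if_neg (by omega)] at hs
    have hs' : kv = (k : ℕ) + 1 := hs
    have e1 : glueFun f g k = f ⟨(k : ℕ), by omega⟩ := dif_pos (by omega)
    have e2 : glueFun f g ⟨kv, hkv⟩ = f ⟨kv, by omega⟩ := dif_pos (show kv < n + 1 by omega)
    rw [e1, e2]
    have := hf ⟨(k : ℕ), by omega⟩
    have hadd : ((⟨(k : ℕ), by omega⟩ : Fin (n + 1)) + 1) = ⟨kv, by omega⟩ := by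
      apply Fin.ext
      rw [fin_succ_val]
      show (if (k : ℕ) = n then 0 else (k : ℕ) + 1) = kv
      rw [if_neg (by omega)]; omega
    rwa [hadd] at this
  · rw [if_neg (by omega)] at hs
    have hs' : kv = (k : ℕ) + 1 := hs
    have e1 : glueFun f g k = f ⟨n, by omega⟩ :=
      (dif_pos (show (k : ℕ) < n + 1 by omega)).trans (congrArg f (Fin.ext h1))
    have e2 : glueFun f g ⟨kv, hkv⟩ = g 0 :=
      (dif_neg (show ¬ kv < n + 1 by omega)).trans
        (congrArg g (Fin.ext (by show kv - (n + 1) = (0 : Fin (m + 1)); simp; omega)))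
    rw [e1, e2]
    have := hf ⟨n, by omega⟩
    have hadd : ((⟨n, by omega⟩ : Fin (n + 1)) + 1) = 0 := by
      apply Fin.ext
      rw [fin_succ_val]
      show (if n = n then 0 else n + 1) = (0 : Fin (n + 1))
      simp
    rw [hadd, hfg] at this
    exact this
  · rcases lt_or_eq_of_le (show (k : ℕ) ≤ n + m + 1 by omega) with h2 | h2
    · rw [if_neg (by omega)] at hs
      have hs' : kv = (k : ℕ) + 1 := hs
      have e1 : glueFun f g k = g ⟨(k : ℕ) - (n + 1), by omega⟩ := dif_neg (by omega)
      have e2 : glueFun f g ⟨kv, hkv⟩ = g ⟨kv - (n + 1), by omega⟩ :=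
        dif_neg (show ¬ kv < n + 1 by omega)
      rw [e1, e2]
      have := hg ⟨(k : ℕ) - (n + 1), by omega⟩
      have hadd : ((⟨(k : ℕ) - (n + 1), by omega⟩ : Fin (m + 1)) + 1) =
          ⟨kv - (n + 1), by omega⟩ := by
        apply Fin.ext
        rw [fin_succ_val]
        show (if (k : ℕ) - (n + 1) = m then 0 else (k : ℕ) - (n + 1) + 1) = kv - (n + 1)
        rw [if_neg (by omega)]; omega
      rwa [hadd] at this
    · rw [if_pos (by omega)] at hs
      have hs' : kv = 0 := hs
      have e1 : glueFun f g k = g ⟨m, by omega⟩ :=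
        (dif_neg (show ¬ (k : ℕ) < n + 1 by omega)).trans
          (congrArg g (Fin.ext (by show (k : ℕ) - (n + 1) = m; omega)))
      have e2 : glueFun f g ⟨kv, hkv⟩ = f 0 :=
        (dif_pos (show kv < n + 1 by omega)).trans
          (congrArg f (Fin.ext (by show kv = (0 : Fin (n + 1)); simp; omega)))
      rw [e1, e2, hfg]
      have := hg ⟨m, by omega⟩
      have hadd : ((⟨m, by omega⟩ : Fin (m + 1)) + 1) = 0 := by
        apply Fin.ext
        rw [fin_succ_val]
        show (if m = m then 0 else m + 1) = (0 : Fin (m + 1))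
        simp
      rwa [hadd] at this

lemma glue_mem_f {V : Type*} {n m : ℕ} (f : Fin (n + 1) → V) (g : Fin (m + 1) → V)
    (i : Fin (n + 1)) : ∃ k, glueFun f g k = f i := by
  refine ⟨⟨(i : ℕ), by have := i.isLt; omega⟩, ?_⟩
  have : glueFun f g ⟨(i : ℕ), by have := i.isLt; omega⟩ = f ⟨(i : ℕ), i.isLt⟩ :=
    dif_pos i.isLt
  rw [this]

lemma glue_mem_g {V : Type*} {n m : ℕ} (f : Fin (n + 1) → V) (g : Fin (m + 1) → V)
    (j : Fin (m + 1)) : ∃ k, glueFun f g k = g j := by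
  refine ⟨⟨n + 1 + (j : ℕ), by have := j.isLt; omega⟩, ?_⟩
  have : glueFun f g ⟨n + 1 + (j : ℕ), by have := j.isLt; omega⟩ =
      g ⟨n + 1 + (j : ℕ) - (n + 1), by have := j.isLt; omega⟩ :=
    dif_neg (show ¬ n + 1 + (j : ℕ) < n + 1 by omega)
  rw [this]
  congr 1
  exact Fin.ext (by simp)

lemma glue_apply_cases {V : Type*} {n m : ℕ} (f : Fin (n + 1) → V) (g : Fin (m + 1) → V)
    (k : Fin (n + m + 1 + 1)) :
    (∃ i, glueFun f g k = f i) ∨ (∃ j, glueFun f g k = g j) := by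
  unfold glueFun
  split
  · exact Or.inl ⟨_, rfl⟩
  · exact Or.inr ⟨_, rfl⟩

/-- Key lemma: under the cycle condition `h2`, any coloring `c'` that is
`≡α`-equivalent to `c` assigns every cycle a `c'`-color at least its `c`-color. -/
lemma cycle_color_le {V : Type*} {E : V → V → Prop} {c c' : V → ℕ}
    (hcc : CycEquiv E c c')
    (h2 : ∀ v : V, 1 < c v → ∃ (n : ℕ) (f : Fin (n + 1) → V),
      IsCycle E n f ∧ (∃ i : Fin (n + 1), f i = v) ∧ cColor c f = c v - 1) :
    ∀ (k n : ℕ) (f : Fin (n + 1) → V), IsCycle E n f → cColor c f = k → k ≤ cColor c' f := by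
  intro k
  induction k using Nat.strong_induction_on with
  | _ k IH =>
  intro n f hf hk
  by_contra hb
  push_neg at hb
  have hpar := hcc n f hf
  obtain ⟨i, hi⟩ := exists_cColor_eq c f
  have hcu : 1 < c (f i) := by omega
  obtain ⟨m, g, hg, ⟨j, hj⟩, hgc⟩ := h2 (f i) hcu
  set f' : Fin (n + 1) → V := fun t => f (i + t) with hf'def
  set g' : Fin (m + 1) → V := fun t => g (j + t) with hg'def
  have hf' : IsCycle E n f' := isCycle_rot hf i
  have hg' : IsCycle E m g' := isCycle_rot hg j
  have h0 : f' 0 = g' 0 := by simp [hf'def, hg'def, hj]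
  have hcyc := glue_isCycle hf' hg' h0
  -- the glued cycle has c-color k - 1
  have hub : cColor c (glueFun f' g') ≤ k - 1 := by
    obtain ⟨t0, ht0⟩ := exists_cColor_eq c g
    have hgt0 : g t0 = g' (t0 - j) := by
      simp only [hg'def]
      congr 1
      abel
    obtain ⟨kk, hkk⟩ := glue_mem_g f' g' (t0 - j)
    calc cColor c (glueFun f' g') ≤ c (glueFun f' g' kk) := cColor_le_apply _ _ _
      _ = c (g t0) := by rw [hkk, ← hgt0]
      _ = cColor c g := ht0
      _ = k - 1 := by rw [hgc, hi, hk]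
  have hlb : k - 1 ≤ cColor c (glueFun f' g') := by
    apply le_cColor
    intro t
    rcases glue_apply_cases f' g' t with ⟨i2, h⟩ | ⟨j2, h⟩
    · rw [h]
      have := cColor_le_apply c f (i + i2)
      simp only [hf'def]
      omega
    · rw [h]
      have := cColor_le_apply c g (j + j2)
      have hgck : cColor c g = k - 1 := by rw [hgc, hi, hk]
      simp only [hg'def]
      omega
  have hcol : cColor c (glueFun f' g') = k - 1 := le_antisymm hub hlb
  have hIH := IH (k - 1) (by omega) _ _ hcyc hcol
  -- the glued cycle has c'-color at most cColor c' f
  obtain ⟨i', hi'⟩ := exists_cColor_eq c' f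
  have hfi' : f i' = f' (i' - i) := by
    simp only [hf'def]
    congr 1
    abel
  obtain ⟨kk, hkk⟩ := glue_mem_f f' g' (i' - i)
  have hle : cColor c' (glueFun f' g') ≤ cColor c' f := by
    calc cColor c' (glueFun f' g') ≤ c' (glueFun f' g' kk) := cColor_le_apply _ _ _
      _ = c' (f i') := by rw [hkk, ← hfi']
      _ = cColor c' f := hi'
  omega

lemma apply_le_idx {V : Type*} [Fintype V] (c : V → ℕ) (v : V) : c v ≤ idx c :=
  le_csSup (Set.finite_range c).bddAbove ⟨v, rfl⟩

/-- If some cycle has color `μ(c)` and every node `v` with `c(v) > 1`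
lies on a cycle of color `c(v) − 1`, then no `≡α`-equivalent coloring has smaller
index, and `μ(c) = RIα(c)`. -/
theorem index_eq_abstract_rabin_index_of_cycle_conditions
    {V : Type*} [Fintype V] [Nonempty V] (E : V → V → Prop)
    (hE : ∀ v : V, ∃ w : V, E v w) (c : V → ℕ)
    (h1 : ∃ (n : ℕ) (f : Fin (n + 1) → V), IsCycle E n f ∧ cColor c f = idx c)
    (h2 : ∀ v : V, 1 < c v → ∃ (n : ℕ) (f : Fin (n + 1) → V),
      IsCycle E n f ∧ (∃ i : Fin (n + 1), f i = v) ∧ cColor c f = c v - 1) :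
    (¬ ∃ c' : V → ℕ, CycEquiv E c c' ∧ idx c' < idx c) ∧ RIa E c = idx c := by
  have hA : ¬ ∃ c' : V → ℕ, CycEquiv E c c' ∧ idx c' < idx c := by
    rintro ⟨c', hcc, hlt⟩
    obtain ⟨n, f, hf, hcol⟩ := h1
    have hkey : idx c ≤ cColor c' f := cycle_color_le hcc h2 (idx c) n f hf hcol
    have h1' : cColor c' f ≤ c' (f 0) := cColor_le_apply _ _ 0
    have h2' : c' (f 0) ≤ idx c' := apply_le_idx c' (f 0)
    omega
  refine ⟨hA, le_antisymm ?_ ?_⟩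
  · exact Nat.sInf_le ⟨c, fun n f _ => rfl, rfl⟩
  · have hne : {k | ∃ c' : V → ℕ, CycEquiv E c c' ∧ idx c' = k}.Nonempty :=
      ⟨idx c, c, fun n f _ => rfl, rfl⟩
    apply le_csInf hne
    rintro k ⟨c', hcc, rfl⟩
    by_contra h
    push_neg at h
    exact hA ⟨c', hcc, h⟩
end

section
/- Let (V,E,c) be a colored arena with maximal color m = μ(c) ≥ 1, and suppose no simple cycle in (V,E) has c-color equal to m. Define c' : V → ℕ by c'(v) = m − 1 if c(v) = m and c'(v) = c(v) otherwise. Then for every simple cycle C in (V,E), the c-color of C and the c'-color of C are congruent modulo 2 (hence c ≡ c'). -/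
open Classical

/-- (Soundness of `pop`.) If no simple cycle has the maximal color
`m = μ(c) ≥ 1`, then lowering all occurrences of `m` to `m − 1` preserves the parity
of the color of every simple cycle. -/
theorem pop_step_sound
    {V : Type*} [Fintype V] [Nonempty V] (E : V → V → Prop)
    (hE : ∀ v : V, ∃ w : V, E v w) (c : V → ℕ)
    (hm : 1 ≤ idx c)
    (hno : ¬ ∃ (n : ℕ) (f : Fin (n + 1) → V), IsSimpleCycle E n f ∧ cColor c f = idx c) :
    ∀ (n : ℕ) (f : Fin (n + 1) → V), IsSimpleCycle E n f →
      cColor c f % 2 =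
        cColor (fun v => if c v = idx c then idx c - 1 else c v) f % 2 := by
  intro n f hf
  set m := idx c with hmdef
  set c' : V → ℕ := fun v => if c v = m then m - 1 else c v with hc'
  -- every value of c is ≤ m
  have hle : ∀ v, c v ≤ m := by
    intro v
    have hbdd : BddAbove (Set.range c) := (Set.finite_range c).bddAbove
    exact le_csSup hbdd ⟨v, rfl⟩
  -- the cycle's color is attained and < m
  have hne : (Set.range fun i => c (f i)).Nonempty := ⟨c (f 0), 0, rfl⟩
  have hmem : cColor c f ∈ Set.range fun i => c (f i) := Nat.sInf_mem hne
  obtain ⟨i0, hi0⟩ := hmem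
  have hi0 : c (f i0) = cColor c f := hi0
  have hneq : cColor c f ≠ m := fun h => hno ⟨n, f, hf, h⟩
  have hlt : cColor c f < m := lt_of_le_of_ne (hi0 ▸ hle (f i0)) hneq
  have hkey : cColor c' f = cColor c f := by
    apply le_antisymm
    · -- c' (f i0) = c (f i0) since c (f i0) < m
      have : c (f i0) ≠ m := by rw [hi0]; exact hneq
      have h1 : c' (f i0) = c (f i0) := by simp [hc', this]
      calc cColor c' f ≤ c' (f i0) := Nat.sInf_le ⟨i0, rfl⟩
        _ = cColor c f := by rw [h1, hi0]
    · -- every c' value is ≥ cColor c f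
      have hne' : (Set.range fun i => c' (f i)).Nonempty := ⟨c' (f 0), 0, rfl⟩
      obtain ⟨j, hj⟩ := Nat.sInf_mem hne'
      have hj : c' (f j) = cColor c' f := hj
      rw [← hj]
      by_cases h : c (f j) = m
      · have : c' (f j) = m - 1 := by simp [hc', h]
        rw [this]; omega
      · have : c' (f j) = c (f j) := by simp [hc', h]
        rw [this]; exact Nat.sInf_le ⟨j, rfl⟩
  rw [show cColor (fun v => if c v = idx c then idx c - 1 else c v) f = cColor c' f from rfl,
    hkey]
end

section
/- Let (V,E,c) be a colored arena and v ∈ V a node such that every simple cycle through v has c-color congruent to c(v) modulo 2. Define c' : V → ℕ by c'(v) = c(v) mod 2 and c'(w) = c(w) for w ≠ v. Then for every simple cycle C in (V,E), the c-color of C and the c'-color of C are congruent modulo 2. -/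
open Classical

/-- (Soundness of `cycle` when `getAnchor` returns −1.) If every
simple cycle through `v` has color of the same parity as `c(v)`, then resetting
`c(v)` to its parity preserves the parity of the color of every simple cycle. -/
theorem cycle_step_sound_no_anchor
    {V : Type*} [Fintype V] [Nonempty V] (E : V → V → Prop)
    (hE : ∀ v' : V, ∃ w : V, E v' w) (c : V → ℕ) (v : V)
    (hv : ∀ (n : ℕ) (f : Fin (n + 1) → V), IsSimpleCycle E n f →
      (∃ i : Fin (n + 1), f i = v) → cColor c f % 2 = c v % 2) :
    ∀ (n : ℕ) (f : Fin (n + 1) → V), IsSimpleCycle E n f →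
      cColor c f % 2 = cColor (fun w => if w = v then c v % 2 else c w) f % 2 := by
  intro n f hf
  set c' : V → ℕ := fun w => if w = v then c v % 2 else c w with hc'
  by_cases hvin : ∃ i : Fin (n + 1), f i = v
  · have hM : cColor c f % 2 = c v % 2 := hv n f hf hvin
    obtain ⟨j, hj⟩ := hvin
    have hne' : (Set.range fun i => c' (f i)).Nonempty := ⟨c' (f j), ⟨j, rfl⟩⟩
    obtain ⟨i, hi⟩ := Nat.sInf_mem hne'
    have hle : cColor c' f ≤ c v % 2 := by
      apply Nat.sInf_le
      exact ⟨j, by simp [c', hj]⟩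
    have hcv2 : c v % 2 < 2 := Nat.mod_lt _ (by norm_num)
    by_cases hiv : f i = v
    · have hval0 : cColor c' f = c' (f i) := hi.symm
      have hval : cColor c' f = c v % 2 := by rw [hval0]; simp [c', hiv]
      omega
    · have hval0 : cColor c' f = c' (f i) := hi.symm
      have hval : cColor c' f = c (f i) := by rw [hval0]; simp [c', hiv]
      have hA : cColor c f ≤ c (f i) := Nat.sInf_le ⟨i, rfl⟩
      omega
  · have : (fun i => c' (f i)) = fun i => c (f i) := by
      funext i
      have : f i ≠ v := fun h => hvin ⟨i, h⟩
      simp [c', this]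
    unfold cColor
    rw [this]
end

section
/- Let (V,E,c) be a colored arena, v ∈ V, and j ∈ ℕ with j < c(v) and j not congruent to c(v) modulo 2. Suppose (a) there is a simple cycle through v with c-color j, and (b) every simple cycle through v either has c-color congruent to c(v) modulo 2 or has c-color at most j. Define c' : V → ℕ by c'(v) = j + 1 and c'(w) = c(w) for w ≠ v. Then for every simple cycle C in (V,E), the c-color of C and the c'-color of C are congruent modulo 2. -/
open Classical

/-- (Soundness of `cycle` with maximal anchor `j`.) If there is a
simple cycle through `v` of color `j < c(v)` of opposite parity, and every simple
cycle through `v` has color of the parity of `c(v)` or color at most `j`, then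
resetting `c(v)` to `j + 1` preserves the parity of the color of every simple cycle. -/
theorem cycle_step_sound_anchor
    {V : Type*} [Fintype V] [Nonempty V] (E : V → V → Prop)
    (hE : ∀ v' : V, ∃ w : V, E v' w) (c : V → ℕ) (v : V) (j : ℕ)
    (hj1 : j < c v) (hj2 : j % 2 ≠ c v % 2)
    (ha : ∃ (n : ℕ) (f : Fin (n + 1) → V),
      IsSimpleCycle E n f ∧ (∃ i : Fin (n + 1), f i = v) ∧ cColor c f = j)
    (hb : ∀ (n : ℕ) (f : Fin (n + 1) → V), IsSimpleCycle E n f →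
      (∃ i : Fin (n + 1), f i = v) → cColor c f % 2 = c v % 2 ∨ cColor c f ≤ j) :
    ∀ (n : ℕ) (f : Fin (n + 1) → V), IsSimpleCycle E n f →
      cColor c f % 2 = cColor (fun w => if w = v then j + 1 else c w) f % 2 := by
  intro n f hf
  set c' : V → ℕ := fun w => if w = v then j + 1 else c w with hc'
  by_cases hv : ∃ i : Fin (n + 1), f i = v
  · -- cycle passes through v
    obtain ⟨i₀, hi₀⟩ := hv
    have hne : (Set.range fun i : Fin (n + 1) => c (f i)).Nonempty := ⟨c (f 0), ⟨0, rfl⟩⟩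
    have hne' : (Set.range fun i : Fin (n + 1) => c' (f i)).Nonempty := ⟨c' (f 0), ⟨0, rfl⟩⟩
    have hmem : cColor c f ∈ Set.range fun i : Fin (n + 1) => c (f i) := Nat.sInf_mem hne
    obtain ⟨i₁, hi₁⟩ := hmem
    have hle : ∀ i : Fin (n + 1), cColor c f ≤ c (f i) := fun i => Nat.sInf_le ⟨i, rfl⟩
    by_cases hmj : cColor c f ≤ j
    · -- color at most j: unchanged
      have hfv : f i₁ ≠ v := by
        intro h
        simp only [h] at hi₁
        omega
      have h1 : cColor c' f ≤ cColor c f := by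
        have : c' (f i₁) = cColor c f := by simp [hc', hfv, hi₁]
        calc cColor c' f ≤ c' (f i₁) := Nat.sInf_le ⟨i₁, rfl⟩
          _ = cColor c f := this
      have h2 : cColor c f ≤ cColor c' f := by
        apply le_csInf hne'
        rintro x ⟨i, rfl⟩
        by_cases h : f i = v
        · simp only [hc', h, if_pos rfl]; omega
        · simp only [hc', if_neg h]; exact hle i
      omega
    · -- color of parity of c v
      have hpar : cColor c f % 2 = c v % 2 := by
        rcases hb n f hf ⟨i₀, hi₀⟩ with h | h
        · exact h
        · omega
      have h1 : cColor c' f ≤ j + 1 := by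
        have : c' (f i₀) = j + 1 := by simp [hc', hi₀]
        calc cColor c' f ≤ c' (f i₀) := Nat.sInf_le ⟨i₀, rfl⟩
          _ = j + 1 := this
      have h2 : j + 1 ≤ cColor c' f := by
        apply le_csInf hne'
        rintro x ⟨i, rfl⟩
        by_cases h : f i = v
        · simp [hc', h]
        · simp only [hc', if_neg h]
          have := hle i
          omega
      omega
  · -- cycle avoids v: colors identical
    push_neg at hv
    have : (fun i : Fin (n + 1) => c' (f i)) = fun i => c (f i) := by
      funext i; simp [hc', hv i]
    unfold cColor
    rw [this]
end

section
/- Let (V,E,c) be a colored arena and let c' : V → ℕ satisfy c ≡ c' and μ(c') = RI(c). Then the minimal color min_{v∈V} c'(v) is at most 1, and c' has no color gaps: for every j with min_{v∈V} c'(v) ≤ j ≤ μ(c'), there is a node v ∈ V with c'(v) = j. -/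
private lemma cColor_eq_comp {V : Type*} (g : ℕ → ℕ) (c : V → ℕ) {n : ℕ} (f : Fin (n + 1) → V)
    (hmono : ∀ a b, a ∈ Set.range c → b ∈ Set.range c → a ≤ b → g a ≤ g b) :
    cColor (fun v => g (c v)) f = g (cColor c f) := by
  have hne : (Set.range fun i => c (f i)).Nonempty := ⟨c (f 0), ⟨0, rfl⟩⟩
  obtain ⟨i₀, hi₀⟩ := Nat.sInf_mem hne
  change c (f i₀) = _ at hi₀
  unfold cColor
  apply le_antisymm
  · rw [← hi₀]
    exact Nat.sInf_le ⟨i₀, rfl⟩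
  · apply le_csInf (⟨g (c (f 0)), 0, rfl⟩ : (Set.range fun i => (fun v => g (c v)) (f i)).Nonempty)
    rintro b ⟨i, rfl⟩
    exact hmono _ _ ⟨f i₀, hi₀⟩ ⟨f i, rfl⟩ (Nat.sInf_le ⟨i, rfl⟩)

private lemma idx_eq_comp {V : Type*} [Fintype V] [Nonempty V] (g : ℕ → ℕ) (c : V → ℕ)
    (hmono : ∀ a b, a ∈ Set.range c → b ∈ Set.range c → a ≤ b → g a ≤ g b) :
    idx (fun v => g (c v)) = g (idx c) := by
  have hfin : (Set.range c).Finite := Set.finite_range c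
  have hne : (Set.range c).Nonempty := Set.range_nonempty c
  obtain ⟨v₀, hv₀⟩ := hne.csSup_mem hfin
  unfold idx
  apply le_antisymm
  · apply csSup_le (Set.range_nonempty _)
    rintro b ⟨v, rfl⟩
    exact hmono _ _ ⟨v, rfl⟩ ⟨v₀, hv₀⟩ (le_csSup hfin.bddAbove ⟨v, rfl⟩)
  · rw [← hv₀]
    exact le_csSup (Set.finite_range _).bddAbove ⟨v₀, rfl⟩

private lemma key_lemma {V : Type*} [Fintype V] [Nonempty V] (E : V → V → Prop)
    (c c' : V → ℕ) (hequiv : SCEquiv E c c') (hwit : idx c' = RI E c) (g : ℕ → ℕ)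
    (hmono : ∀ a b, a ∈ Set.range c' → b ∈ Set.range c' → a ≤ b → g a ≤ g b)
    (hpar : ∀ a, a ∈ Set.range c' → g a % 2 = a % 2)
    (hlt : g (idx c') < idx c') : False := by
  have hsc : SCEquiv E c (fun v => g (c' v)) := by
    intro n f hf
    rw [cColor_eq_comp g c' f hmono, hequiv n f hf]
    have hm : cColor c' f ∈ Set.range c' := by
      obtain ⟨i, hi⟩ := Nat.sInf_mem
        (⟨c' (f 0), ⟨0, rfl⟩⟩ : (Set.range fun i => c' (f i)).Nonempty)
      exact ⟨f i, hi⟩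
    exact (hpar _ hm).symm
  have hmem : idx (fun v => g (c' v)) ∈
      {k | ∃ c'' : V → ℕ, SCEquiv E c c'' ∧ idx c'' = k} := ⟨_, hsc, rfl⟩
  have hle : RI E c ≤ idx (fun v => g (c' v)) := Nat.sInf_le hmem
  rw [idx_eq_comp g c' hmono] at hle
  omega

/-- A coloring `c'` equivalent to `c` witnessing the Rabin index
(`μ(c') = RI(c)`) has minimal color at most `1` and no color gaps. -/
theorem rabin_witness_min_le_one_and_no_gaps
    {V : Type*} [Fintype V] [Nonempty V] (E : V → V → Prop)
    (hE : ∀ v : V, ∃ w : V, E v w) (c c' : V → ℕ)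
    (hequiv : SCEquiv E c c') (hwit : idx c' = RI E c) :
    sInf (Set.range c') ≤ 1 ∧
    ∀ j : ℕ, sInf (Set.range c') ≤ j → j ≤ idx c' → ∃ v : V, c' v = j := by
  have hfin : (Set.range c').Finite := Set.finite_range c'
  have hne : (Set.range c').Nonempty := Set.range_nonempty c'
  obtain ⟨v₀, hv₀⟩ := hne.csSup_mem hfin
  have hub : ∀ v, c' v ≤ idx c' := fun v => le_csSup hfin.bddAbove ⟨v, rfl⟩
  obtain ⟨vm, hvm⟩ := Nat.sInf_mem hne
  have hlb : ∀ v, sInf (Set.range c') ≤ c' v := fun v => Nat.sInf_le ⟨v, rfl⟩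
  constructor
  · by_contra h
    push_neg at h
    have h2 : ∀ v, 2 ≤ c' v := fun v => le_trans h (hlb v)
    refine key_lemma E c c' hequiv hwit (fun a => a - 2) ?_ ?_ ?_
    · rintro a b ⟨v, rfl⟩ ⟨w, rfl⟩ hab; omega
    · rintro a ⟨v, rfl⟩; have := h2 v; omega
    · have : 2 ≤ idx c' := le_trans (h2 v₀) (hub v₀)
      omega
  · intro j hj1 hj2
    by_contra h
    push_neg at h
    have hjm : sInf (Set.range c') ≠ j := fun heq => h vm (heq ▸ hvm)
    have hj1' : 1 ≤ j := by omega
    have hjM : j < idx c' := by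
      rcases lt_or_eq_of_le hj2 with h' | h'
      · exact h'
      · exact absurd (h' ▸ hv₀) (h v₀)
    refine key_lemma E c c' hequiv hwit (fun a => if j < a then a - 2 else a) ?_ ?_ ?_
    · rintro a b ⟨v, rfl⟩ ⟨w, rfl⟩ hab
      have := h v; have := h w
      split_ifs <;> omega
    · rintro a ⟨v, rfl⟩
      have := h v
      split_ifs <;> omega
    · split_ifs <;> omega
end

section
/- For every natural number n there exists a colored arena (V,E,c) such that RIα(c) − RI(c) ≥ n, i.e., the gap between the abstract Rabin index and the Rabin index can be arbitrarily large. -/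
/-! ### Auxiliary lemmas -/

lemma sInf_range_two' (g : Fin 2 → ℕ) : sInf (Set.range g) = min (g 0) (g 1) := by
  apply le_antisymm
  · rcases min_choice (g 0) (g 1) with h | h <;> rw [h] <;> exact Nat.sInf_le ⟨_, rfl⟩
  · refine le_csInf ⟨g 0, 0, rfl⟩ ?_
    rintro _ ⟨j, rfl⟩
    fin_cases j
    · exact min_le_left _ _
    · exact min_le_right _ _

lemma sInf_range_four' (g : Fin 4 → ℕ) :
    sInf (Set.range g) = min (min (g 0) (g 1)) (min (g 2) (g 3)) := by
  apply le_antisymm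
  · rcases min_choice (min (g 0) (g 1)) (min (g 2) (g 3)) with h | h <;> rw [h]
    · rcases min_choice (g 0) (g 1) with h' | h' <;> rw [h'] <;> exact Nat.sInf_le ⟨_, rfl⟩
    · rcases min_choice (g 2) (g 3) with h' | h' <;> rw [h'] <;> exact Nat.sInf_le ⟨_, rfl⟩
  · refine le_csInf ⟨g 0, 0, rfl⟩ ?_
    rintro _ ⟨j, rfl⟩
    fin_cases j
    exacts [le_trans (min_le_left _ _) (min_le_left _ _),
      le_trans (min_le_left _ _) (min_le_right _ _),
      le_trans (min_le_right _ _) (min_le_left _ _),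
      le_trans (min_le_right _ _) (min_le_right _ _)]

lemma cColor_two {V : Type*} (c : V → ℕ) (f : Fin 2 → V) :
    cColor c f = min (c (f 0)) (c (f 1)) := sInf_range_two' (fun k => c (f k))

lemma cColor_four {V : Type*} (c : V → ℕ) (f : Fin 4 → V) :
    cColor c f = min (min (c (f 0)) (c (f 1))) (min (c (f 2)) (c (f 3))) :=
  sInf_range_four' (fun k => c (f k))

/-- The flower arena: hub `none`, petals `some i`; edges exactly between hub and petals. -/
def En (n : ℕ) : Option (Fin (n+2)) → Option (Fin (n+2)) → Prop :=
  fun x y => x.isNone = !y.isNone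

/-- The coloring: hub gets `n+2`, petal `i` gets `i`. -/
def cn (n : ℕ) : Option (Fin (n+2)) → ℕ := fun v => v.elim (n+2) Fin.val

lemma cyc2 (n : ℕ) (i : Fin (n+2)) :
    IsCycle (En n) 1 ![none, some i] := by
  intro k; fin_cases k <;> simp [En]

lemma cyc4 (n : ℕ) (i j : Fin (n+2)) :
    IsCycle (En n) 3 ![none, some i, none, some j] := by
  intro k; fin_cases k <;> simp [En]

/-- Any coloring cycle-equivalent to `cn` has index at least `n+1`. -/
lemma RIa_lower (n : ℕ) (c' : Option (Fin (n+2)) → ℕ) (h : CycEquiv (En n) (cn n) c') :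
    n + 1 ≤ idx c' := by
  -- two-node cycles
  have h2 : ∀ i : Fin (n+2), min (c' none) (c' (some i)) % 2 = i.val % 2 := by
    intro i
    have hc := h 1 ![none, some i] (cyc2 n i)
    rw [cColor_two, cColor_two] at hc
    have hc' : min (n+2) i.val % 2 = min (c' none) (c' (some i)) % 2 := hc
    rw [min_eq_right (by omega : i.val ≤ n + 2)] at hc'
    exact hc'.symm
  -- four-node cycles
  have h4 : ∀ i j : Fin (n+2), i.val < j.val →
      min (min (c' none) (c' (some i))) (min (c' none) (c' (some j))) % 2 = i.val % 2 := by
    intro i j hij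
    have hc := h 3 ![none, some i, none, some j] (cyc4 n i j)
    rw [cColor_four, cColor_four] at hc
    have hc' : min (min (n+2) i.val) (min (n+2) j.val) % 2
        = min (min (c' none) (c' (some i))) (min (c' none) (c' (some j))) % 2 := hc
    rw [min_eq_right (by omega : i.val ≤ n + 2),
        min_eq_right (by omega : j.val ≤ n + 2),
        min_eq_left (le_of_lt hij)] at hc'
    exact hc'.symm
  -- induction: min (c' none) (c' (some k)) ≥ k
  have key : ∀ k : ℕ, ∀ hk : k < n + 2, k ≤ min (c' none) (c' (some ⟨k, hk⟩)) := by
    intro k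
    induction k with
    | zero => intro _; exact Nat.zero_le _
    | succ k ih =>
      intro hk
      have hk' : k < n + 2 := by omega
      have ha : min (c' none) (c' (some ⟨k, hk'⟩)) % 2 = k % 2 := h2 ⟨k, hk'⟩
      have hb : min (c' none) (c' (some ⟨k+1, hk⟩)) % 2 = (k+1) % 2 := h2 ⟨k+1, hk⟩
      have hab : min (min (c' none) (c' (some ⟨k, hk'⟩))) (min (c' none) (c' (some ⟨k+1, hk⟩))) % 2
          = k % 2 := h4 ⟨k, hk'⟩ ⟨k+1, hk⟩ (by simp)
      have hik := ih hk'
      set A := min (c' none) (c' (some ⟨k, hk'⟩)) with hA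
      set B := min (c' none) (c' (some ⟨k+1, hk⟩)) with hB
      have hmr := min_le_right A B
      rcases min_choice A B with hm | hm <;> rw [hm] at hab hmr <;> omega
  have hfin : n + 1 ≤ c' (some ⟨n+1, by omega⟩) :=
    le_trans (key (n+1) (by omega)) (min_le_right _ _)
  exact le_trans hfin (le_csSup (Set.Finite.bddAbove (Set.finite_range c')) ⟨_, rfl⟩)

/-- The low-index coloring: hub gets 1, petal `i` gets `i % 2`. -/
def cn' (n : ℕ) : Option (Fin (n+2)) → ℕ := fun v => v.elim 1 (fun i => i.val % 2)

lemma idx_cn' (n : ℕ) : idx (cn' n) = 1 := by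
  apply le_antisymm
  · refine csSup_le ⟨1, none, rfl⟩ ?_
    rintro _ ⟨v, rfl⟩
    cases v with
    | none => exact le_refl 1
    | some i => simp [cn']; omega
  · refine le_csSup (Set.Finite.bddAbove (Set.finite_range _)) ⟨none, rfl⟩

lemma SCEquiv_cn' (n : ℕ) : SCEquiv (En n) (cn n) (cn' n) := by
  rintro m f ⟨hcyc, hinj⟩
  match m with
  | 0 =>
    have h0 := hcyc 0
    have : (0 : Fin 1) + 1 = 0 := rfl
    rw [this] at h0
    simp only [En] at h0
    cases hb : (f 0).isNone <;> rw [hb] at h0 <;> simp at h0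
  | 1 =>
    have h0 := hcyc 0
    have e : (0 : Fin 2) + 1 = 1 := rfl
    rw [e] at h0
    simp only [En] at h0
    rw [cColor_two, cColor_two]
    cases hf0 : f 0 with
    | none =>
      rw [hf0] at h0
      cases hf1 : f 1 with
      | none => rw [hf1] at h0; simp at h0
      | some i =>
        show min (cn n none) (cn n (some i)) % 2 = min (cn' n none) (cn' n (some i)) % 2
        simp only [cn, cn', Option.elim]
        have : i.val < n + 2 := i.isLt
        omega
    | some i =>
      rw [hf0] at h0
      cases hf1 : f 1 with
      | some j => rw [hf1] at h0; simp at h0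
      | none =>
        show min (cn n (some i)) (cn n none) % 2 = min (cn' n (some i)) (cn' n none) % 2
        simp only [cn, cn', Option.elim]
        have : i.val < n + 2 := i.isLt
        omega
  | (k+2) =>
    exfalso
    -- set up the boolean sequence around the cycle
    have hpos : 0 < k + 3 := by omega
    set b : ℕ → Bool := fun a => (f ⟨a % (k+3), Nat.mod_lt a hpos⟩).isNone with hbdef
    have hidx : ∀ a : ℕ, (⟨a % (k+3), Nat.mod_lt a hpos⟩ : Fin (k+3)) + 1
        = ⟨(a+1) % (k+3), Nat.mod_lt (a+1) hpos⟩ := by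
      intro a
      apply Fin.ext
      simp [Fin.add_def]
    have hb : ∀ a : ℕ, b a = !b (a+1) := by
      intro a
      have hc := hcyc ⟨a % (k+3), Nat.mod_lt a hpos⟩
      rw [hidx a] at hc
      exact hc
    have huniq : ∀ a a' : ℕ, b a = true → b a' = true → a % (k+3) = a' % (k+3) := by
      intro a a' ha ha'
      simp only [hbdef, Option.isNone_iff_eq_none] at ha ha'
      have := hinj (ha.trans ha'.symm)
      exact congrArg Fin.val this
    have hb01 := hb 0
    have hb12 := hb 1
    have hb23 := hb 2
    have h20 : b 2 = b 0 := by rw [hb01, hb12, Bool.not_not]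
    have h31 : b 3 = b 1 := by rw [hb12, hb23, Bool.not_not]
    cases h0 : b 0 with
    | true =>
      rw [h0] at h20
      have heq := huniq 2 0 h20 h0
      rw [Nat.mod_eq_of_lt (by omega : (2:ℕ) < k+3),
        Nat.mod_eq_of_lt (by omega : (0:ℕ) < k+3)] at heq
      omega
    | false =>
      rw [h0] at hb01
      have h1' : b 1 = true := by simpa using hb01.symm
      rw [h1'] at h31
      have heq := huniq 1 3 h1' h31
      rw [Nat.mod_eq_of_lt (by omega : (1:ℕ) < k+3)] at heq
      rcases Nat.eq_zero_or_pos k with hk0 | hkpos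
      · subst hk0
        norm_num at heq
      · rw [Nat.mod_eq_of_lt (by omega : (3:ℕ) < k+3)] at heq
        omega

/-- The gap between the abstract Rabin index and the Rabin index
can be arbitrarily large. -/
theorem abstract_rabin_index_gap_unbounded (n : ℕ) :
    ∃ (V : Type) (_ : Fintype V) (_ : Nonempty V) (E : V → V → Prop) (c : V → ℕ),
      (∀ v : V, ∃ w : V, E v w) ∧ n ≤ RIa E c - RI E c := by
  refine ⟨Option (Fin (n+2)), inferInstance, ⟨none⟩, En n, cn n, ?_, ?_⟩
  · intro v
    cases v with
    | none => exact ⟨some 0, by simp [En]⟩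
    | some i => exact ⟨none, by simp [En]⟩
  · have hRIa : n + 1 ≤ RIa (En n) (cn n) := by
      refine le_csInf ⟨idx (cn n), cn n, fun m f _ => rfl, rfl⟩ ?_
      rintro k ⟨c', hcyc, rfl⟩
      exact RIa_lower n c' hcyc
    have hRI : RI (En n) (cn n) ≤ 1 :=
      Nat.sInf_le ⟨cn' n, SCEquiv_cn' n, idx_cn' n⟩
    omega
end

section
/- There exist a finite directed graph (V,E) in which every node has at least one outgoing edge and coloring functions c, c' : V → ℕ such that for every partition V = V₀ ∪ V₁ the parity games (V,V₀,V₁,E,c) and (V,V₀,V₁,E,c') have the same winning regions for both players, but there is a partition for which the sets of winning strategies of the two games differ; hence c ≢ c'. -/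
namespace St18

def EE : Bool → Bool → Prop := fun v w => v = false ∨ w = false
def c1 : Bool → ℕ := fun v => cond v 0 1
def c2 : Bool → ℕ := fun v => cond v 1 2

lemma tau_true {S : Set Bool} {τ : Bool → Bool} (hτ : IsStrategy EE S τ)
    (h : true ∈ S) : τ true = false := by
  rcases hτ true h with h' | h'
  · exact absurd h' (by simp)
  · exact h'

lemma play_true {P : ℕ → Bool} (hP : IsPlay EE P) {i : ℕ} (h : P i = true) :
    P (i + 1) = false := by
  rcases hP i with h' | h'
  · rw [h] at h'; exact absurd h' (by simp)
  · exact h'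

lemma minInf_ev_false (d : Bool → ℕ) (P : ℕ → Bool) (h : ∀ i, 1 ≤ i → P i = false) :
    minInf d P = d false := by
  have hmem : d false ∈ {k | ∀ j, ∃ i, j < i ∧ d (P i) = k} :=
    fun j => ⟨j + 1, Nat.lt_succ_self j, by rw [h (j + 1) (by omega)]⟩
  have huniq : ∀ k ∈ {k | ∀ j, ∃ i, j < i ∧ d (P i) = k}, k = d false := by
    intro k hk
    obtain ⟨i, hi, hci⟩ := hk 0
    rw [h i hi] at hci
    exact hci.symm
  exact huniq _ (Nat.sInf_mem ⟨_, hmem⟩)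

lemma minInf_inf_true (d : Bool → ℕ) (hd : d true ≤ d false) (P : ℕ → Bool)
    (h : ∀ j, ∃ i, j < i ∧ P i = true) : minInf d P = d true := by
  have hmem : d true ∈ {k | ∀ j, ∃ i, j < i ∧ d (P i) = k} := by
    intro j
    obtain ⟨i, hi, ht⟩ := h j
    exact ⟨i, hi, by rw [ht]⟩
  have hle : sInf {k | ∀ j, ∃ i, j < i ∧ d (P i) = k} ≤ d true := Nat.sInf_le hmem
  have hS := Nat.sInf_mem (⟨_, hmem⟩ :
    Set.Nonempty {k | ∀ j, ∃ i, j < i ∧ d (P i) = k})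
  obtain ⟨i, _, hci⟩ := hS 0
  have : d (P i) = d true ∨ d (P i) = d false := by cases P i <;> simp
  unfold minInf
  omega

lemma cons_not {S : Set Bool} (hS : false ∈ S) {P : ℕ → Bool}
    (hC : Consistent S (fun v => !v) P) : ∀ j, ∃ i, j < i ∧ P i = true := by
  intro j
  by_cases h1 : P (j + 1) = true
  · exact ⟨j + 1, Nat.lt_succ_self j, h1⟩
  · have hf : P (j + 1) = false := by simpa using h1
    have h2 := hC (j + 1) (hf ▸ hS)
    refine ⟨j + 2, by omega, ?_⟩
    rw [show j + 2 = j + 1 + 1 from rfl, h2, hf]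
    rfl

lemma cons_const {S : Set Bool} (hS : false ∈ S) {P : ℕ → Bool}
    (hP : IsPlay EE P) (hC : Consistent S (fun _ => false) P) :
    ∀ i, 1 ≤ i → P i = false := by
  intro i hi
  induction i with
  | zero => omega
  | succ n ih =>
    by_cases hn : n = 0
    · subst hn
      cases h0 : P 0
      · exact hC 0 (h0 ▸ hS)
      · exact play_true hP h0
    · have hPn : P n = false := ih (by omega)
      exact hC n (hPn ▸ hS)

lemma strat_not (S : Set Bool) : IsStrategy EE S (fun v => !v) := by
  intro v _
  cases v
  · exact Or.inl rfl
  · exact Or.inr rfl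

lemma strat_const (S : Set Bool) : IsStrategy EE S (fun _ => false) :=
  fun _ _ => Or.inr rfl

lemma regA {V0 : Set Bool} {s : Bool} (hf : false ∈ playerSet V0 s) :
    WinRegion EE c1 V0 s = Set.univ ∧ WinRegion EE c2 V0 s = Set.univ := by
  cases s
  · constructor
    · apply Set.eq_univ_of_forall
      intro v
      refine ⟨fun v => !v, strat_not _, fun P hP h0 hC => ?_⟩
      have := minInf_inf_true c1 (by simp [c1]) P (cons_not hf hC)
      simp [WinsPlay, this, c1]
    · apply Set.eq_univ_of_forall
      intro v
      refine ⟨fun _ => false, strat_const _, fun P hP h0 hC => ?_⟩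
      have := minInf_ev_false c2 P (cons_const hf hP hC)
      simp [WinsPlay, this, c2]
  · constructor
    · apply Set.eq_univ_of_forall
      intro v
      refine ⟨fun _ => false, strat_const _, fun P hP h0 hC => ?_⟩
      have := minInf_ev_false c1 P (cons_const hf hP hC)
      simp [WinsPlay, this, c1]
    · apply Set.eq_univ_of_forall
      intro v
      refine ⟨fun v => !v, strat_not _, fun P hP h0 hC => ?_⟩
      have := minInf_inf_true c2 (by simp [c2]) P (cons_not hf hC)
      simp [WinsPlay, this, c2]

/-- the play that starts at `v` and then stays at `false` forever -/
def evP (v : Bool) : ℕ → Bool := fun i => if i = 0 then v else false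

lemma evP_play (v : Bool) : IsPlay EE (evP v) :=
  fun i => Or.inr (if_neg (Nat.succ_ne_zero i))

lemma evP_cons {S : Set Bool} (hf : false ∉ S) {τ : Bool → Bool}
    (hτ : IsStrategy EE S τ) (v : Bool) : Consistent S τ (evP v) := by
  intro i hi
  have hit : evP v i = true := by
    cases h : evP v i
    · rw [h] at hi; exact absurd hi hf
    · rfl
  rw [hit, tau_true hτ (hit ▸ hi)]
  exact if_neg (Nat.succ_ne_zero i)

lemma evP_tail (v : Bool) : ∀ i, 1 ≤ i → evP v i = false :=
  fun i hi => if_neg (by omega)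

/-- the play that alternates `v, !v, v, !v, …` -/
def altP (v : Bool) : ℕ → Bool := fun i => if i % 2 = 0 then v else !v

lemma altP_play (v : Bool) : IsPlay EE (altP v) := by
  intro i
  have hm : i % 2 = 0 ∧ (i + 1) % 2 = 1 ∨ i % 2 = 1 ∧ (i + 1) % 2 = 0 := by omega
  rcases hm with ⟨h1, h2⟩ | ⟨h1, h2⟩ <;> (unfold altP EE; rw [h1, h2]) <;>
    cases v <;> simp

lemma altP_cons {S : Set Bool} (hf : false ∉ S) {τ : Bool → Bool}
    (hτ : IsStrategy EE S τ) (v : Bool) : Consistent S τ (altP v) := by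
  intro i hi
  have hit : altP v i = true := by
    cases h : altP v i
    · rw [h] at hi; exact absurd hi hf
    · rfl
  rw [hit, tau_true hτ (hit ▸ hi)]
  have hm : i % 2 = 0 ∧ (i + 1) % 2 = 1 ∨ i % 2 = 1 ∧ (i + 1) % 2 = 0 := by omega
  unfold altP at hit ⊢
  rcases hm with ⟨h1, h2⟩ | ⟨h1, h2⟩ <;> rw [h2] <;> rw [h1] at hit <;>
    cases v <;> simp_all

lemma altP_inf_true (v : Bool) : ∀ j, ∃ i, j < i ∧ altP v i = true := by
  intro j
  cases v
  · exact ⟨2 * j + 1, by omega, by unfold altP; rw [if_neg (by omega)]; rfl⟩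
  · exact ⟨2 * j + 2, by omega, by unfold altP; rw [if_pos (by omega)]⟩

lemma regB {V0 : Set Bool} {s : Bool} (hf : false ∉ playerSet V0 s) :
    WinRegion EE c1 V0 s = ∅ ∧ WinRegion EE c2 V0 s = ∅ := by
  cases s
  · constructor
    · apply Set.eq_empty_iff_forall_notMem.mpr
      rintro v ⟨τ, hτ, hwin⟩
      have h := hwin (evP v) (evP_play v) (if_pos rfl) (evP_cons hf hτ v)
      have hm := minInf_ev_false c1 (evP v) (evP_tail v)
      simp [WinsPlay, hm, c1] at h
    · apply Set.eq_empty_iff_forall_notMem.mpr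
      rintro v ⟨τ, hτ, hwin⟩
      have h := hwin (altP v) (altP_play v) (if_pos rfl) (altP_cons hf hτ v)
      have hm := minInf_inf_true c2 (by simp [c2]) (altP v) (altP_inf_true v)
      simp [WinsPlay, hm, c2] at h
  · constructor
    · apply Set.eq_empty_iff_forall_notMem.mpr
      rintro v ⟨τ, hτ, hwin⟩
      have h := hwin (altP v) (altP_play v) (if_pos rfl) (altP_cons hf hτ v)
      have hm := minInf_inf_true c1 (by simp [c1]) (altP v) (altP_inf_true v)
      simp [WinsPlay, hm, c1] at h
    · apply Set.eq_empty_iff_forall_notMem.mpr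
      rintro v ⟨τ, hτ, hwin⟩
      have h := hwin (evP v) (evP_play v) (if_pos rfl) (evP_cons hf hτ v)
      have hm := minInf_ev_false c2 (evP v) (evP_tail v)
      simp [WinsPlay, hm, c2] at h

lemma regions_eq (V0 : Set Bool) (s : Bool) :
    WinRegion EE c1 V0 s = WinRegion EE c2 V0 s := by
  by_cases hf : false ∈ playerSet V0 s
  · rw [(regA hf).1, (regA hf).2]
  · rw [(regB hf).1, (regB hf).2]

lemma hfuniv : false ∈ playerSet (Set.univ : Set Bool) false := by
  simp [playerSet]

lemma win2 : IsWinStrategy EE c2 Set.univ false (fun _ => false) := by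
  refine ⟨strat_const _, fun v hv P hP h0 hC => ?_⟩
  have := minInf_ev_false c2 P (cons_const hfuniv hP hC)
  simp [WinsPlay, this, c2]

lemma notwin1 : ¬ IsWinStrategy EE c1 Set.univ false (fun _ => false) := by
  rintro ⟨_, hw⟩
  have hreg : false ∈ WinRegion EE c1 Set.univ false := by
    rw [(regA hfuniv).1]; trivial
  have h := hw false hreg (fun _ => false) (fun i => Or.inl rfl) rfl (fun i _ => rfl)
  have hm := minInf_ev_false c1 (fun _ => false) (fun i _ => rfl)
  simp [WinsPlay, hm, c1] at h

end St18

/-- There are colorings `c, c'` inducing the same winning regions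
for all partitions, yet with different sets of winning strategies for some
partition; hence `c ≢ c'`. -/
theorem same_winning_regions_not_same_strategies :
    ∃ (V : Type) (_ : Fintype V) (_ : Nonempty V) (E : V → V → Prop) (c c' : V → ℕ),
      (∀ v : V, ∃ w : V, E v w) ∧
      (∀ (V0 : Set V) (s : Bool), WinRegion E c V0 s = WinRegion E c' V0 s) ∧
      (∃ (V0 : Set V) (s : Bool) (τ : V → V),
        ¬ (IsWinStrategy E c V0 s τ ↔ IsWinStrategy E c' V0 s τ)) ∧
      ¬ GameEquiv E c c' := by
  classical
  refine ⟨Bool, inferInstance, inferInstance, St18.EE, St18.c1, St18.c2,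
    fun v => ⟨false, Or.inr rfl⟩, St18.regions_eq, ?_, ?_⟩
  · exact ⟨Set.univ, false, fun _ => false,
      fun h => St18.notwin1 (h.mpr St18.win2)⟩
  · intro hG
    exact St18.notwin1 (((hG Set.univ false).2 (fun _ => false)).mpr St18.win2)
end
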